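/- arXiv:2208.13702 — 9 statements merged into one kernel-verified Lean document; each statement's English description precedes it below -/
import Mathlib

section
/- There exists an absolute constant C > 0 such that the following holds. Let m ≥ 3, let τ > 0, and let S_1, …, S_m be random variables on a common probability space such that each S_i = Σ_{j=1}^{n_i} X_{ij} is a finite sum of mutually independent random variables X_{ij} taking values in the interval [0, τ], and E[S_i] ≤ τ for every i. Then E[max_{1 ≤ i ≤ m} S_i] ≤ C · τ · (log m)/(log log m). -/
open MeasureTheory ProbabilityTheory Real

/-- There exists an absolute constant `C > 0` such that: for `m ≥ 3`, `τ > 0`, and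
random variables `S i = ∑ j, X i j` (each a finite sum of mutually independent random
variables with values in `[0, τ]`) with `E[S i] ≤ τ` for every `i`, the expected maximum
satisfies `E[max_i S i] ≤ C · τ · (log m)/(log log m)`. -/
theorem stmt0 :
    ∃ C : ℝ, 0 < C ∧
      ∀ (Ω : Type) [MeasureSpace Ω] [IsProbabilityMeasure (ℙ : Measure Ω)]
        (m : ℕ), 3 ≤ m →
        ∀ (τ : ℝ), 0 < τ →
        ∀ (n : Fin m → ℕ) (X : (i : Fin m) → Fin (n i) → Ω → ℝ),
          (∀ i j, Measurable (X i j)) →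
          (∀ i, iIndepFun (X i) ℙ) →
          (∀ i j ω, X i j ω ∈ Set.Icc (0 : ℝ) τ) →
          (∀ i, (∫ ω, ∑ j, X i j ω) ≤ τ) →
          (∫ ω, ⨆ i, ∑ j, X i j ω) ≤ C * τ * (Real.log m / Real.log (Real.log m)) := by
  refine ⟨2, by norm_num, ?_⟩
  intro Ω _ _ m hm τ hτ n X hXmeas hindep hXbdd hES
  have hm3 : (3 : ℝ) ≤ (m : ℝ) := by exact_mod_cast hm
  have hm1 : (1 : ℝ) < Real.log m := by
    have he : Real.exp 1 < 3 := by
      have := Real.exp_one_lt_d9; linarith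
    calc (1 : ℝ) = Real.log (Real.exp 1) := (Real.log_exp 1).symm
      _ < Real.log m := Real.log_lt_log (Real.exp_pos 1) (lt_of_lt_of_le he hm3)
  have hlogmpos : (0 : ℝ) < Real.log m := by linarith
  set L : ℝ := Real.log (Real.log m) with hLdef
  have hL : 0 < L := Real.log_pos hm1
  set lam : ℝ := L / τ with hlamdef
  have hlam : 0 < lam := div_pos hL hτ
  have hlamτ : lam * τ = L := div_mul_cancel₀ _ (ne_of_gt hτ)
  have hexplamτ : Real.exp (lam * τ) = Real.log m := by
    rw [hlamτ, hLdef, Real.exp_log hlogmpos]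
  set κ : ℝ := (Real.log m - 1) / τ with hκdef
  have hκ : 0 ≤ κ := div_nonneg (by linarith) hτ.le
  -- pointwise exponential bound
  have hpt : ∀ x : ℝ, x ∈ Set.Icc (0 : ℝ) τ → Real.exp (lam * x) ≤ 1 + κ * x := by
    intro x hx
    have hs0 : 0 ≤ x / τ := div_nonneg hx.1 hτ.le
    have hs1 : x / τ ≤ 1 := (div_le_one hτ).2 hx.2
    have hconv := convexOn_exp.2 (Set.mem_univ (0 : ℝ)) (Set.mem_univ (lam * τ))
      (by linarith : (0 : ℝ) ≤ 1 - x / τ) hs0 (by ring)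
    simp only [smul_eq_mul, mul_zero, zero_add, Real.exp_zero, mul_one] at hconv
    have harg : x / τ * (lam * τ) = lam * x := by field_simp
    rw [harg, hexplamτ] at hconv
    have : 1 - x / τ + x / τ * Real.log m = 1 + κ * x := by
      rw [hκdef]; field_simp; ring
    linarith
  -- integrability of X i j and exp(lam * X i j)
  have hXint : ∀ i j, Integrable (X i j) := by
    intro i j
    refine (integrable_const τ).mono' (hXmeas i j).aestronglyMeasurable
      (ae_of_all _ fun ω => ?_)
    rw [Real.norm_eq_abs, abs_of_nonneg (hXbdd i j ω).1]
    exact (hXbdd i j ω).2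
  have hexpint : ∀ i j, Integrable (fun ω => Real.exp (lam * X i j ω)) := by
    intro i j
    refine (integrable_const (Real.exp (lam * τ))).mono'
      (((hXmeas i j).const_mul lam).exp).aestronglyMeasurable (ae_of_all _ fun ω => ?_)
    rw [Real.norm_eq_abs, abs_of_nonneg (Real.exp_pos _).le]
    exact Real.exp_le_exp.2 (mul_le_mul_of_nonneg_left (hXbdd i j ω).2 hlam.le)
  -- mgf bound for each summand
  have hmgfj : ∀ i j, mgf (X i j) ℙ lam ≤ Real.exp (κ * ∫ ω, X i j ω) := by
    intro i j
    have h1 : mgf (X i j) ℙ lam = ∫ ω, Real.exp (lam * X i j ω) := rfl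
    have h2 : (∫ ω, Real.exp (lam * X i j ω)) ≤ ∫ ω, (1 + κ * X i j ω) := by
      refine integral_mono (hexpint i j) ((integrable_const 1).add ((hXint i j).const_mul κ))
        (fun ω => hpt _ (hXbdd i j ω))
    have h3 : (∫ ω, (1 + κ * X i j ω)) = 1 + κ * ∫ ω, X i j ω := by
      have hi1 : Integrable (fun ω : Ω => (1:ℝ)) := integrable_const 1
      have hi2 : Integrable (fun ω => κ * X i j ω) := (hXint i j).const_mul κ
      rw [integral_add hi1 hi2, integral_const_mul, integral_const]
      simp
    have h4 : 1 + κ * (∫ ω, X i j ω) ≤ Real.exp (κ * ∫ ω, X i j ω) := by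
      have := Real.add_one_le_exp (κ * ∫ ω, X i j ω); linarith
    rw [h1]; linarith
  -- mgf bound for each S i
  have key : ∀ i, (∫ ω, Real.exp (lam * ∑ j, X i j ω)) ≤ (m : ℝ) := by
    intro i
    have h1 : (∫ ω, Real.exp (lam * ∑ j, X i j ω)) = mgf (∑ j, X i j) ℙ lam := by
      simp only [mgf, Finset.sum_apply]
    rw [h1, (hindep i).mgf_sum (hXmeas i)]
    calc ∏ j, mgf (X i j) ℙ lam
        ≤ ∏ j, Real.exp (κ * ∫ ω, X i j ω) :=
          Finset.prod_le_prod (fun j _ => mgf_nonneg) (fun j _ => hmgfj i j)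
      _ = Real.exp (∑ j, κ * ∫ ω, X i j ω) := (Real.exp_sum _ _).symm
      _ = Real.exp (κ * ∫ ω, ∑ j, X i j ω) := by
          rw [integral_finset_sum _ (fun j _ => hXint i j), Finset.mul_sum]
      _ ≤ Real.exp (κ * τ) :=
          Real.exp_le_exp.2 (mul_le_mul_of_nonneg_left (hES i) hκ)
      _ ≤ (m : ℝ) := by
          have : κ * τ = Real.log m - 1 := div_mul_cancel₀ _ (ne_of_gt hτ)
          rw [this]
          calc Real.exp (Real.log m - 1) ≤ Real.exp (Real.log m) :=
                Real.exp_le_exp.2 (by linarith)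
            _ = (m : ℝ) := Real.exp_log (by linarith)
  -- the softmax function T
  set T : Ω → ℝ := fun ω => ∑ i, Real.exp (lam * ∑ j, X i j ω) with hTdef
  have hSnonneg : ∀ i (ω : Ω), 0 ≤ ∑ j, X i j ω :=
    fun i ω => Finset.sum_nonneg fun j _ => (hXbdd i j ω).1
  have hSleB : ∀ i (ω : Ω), (∑ j, X i j ω) ≤ (n i : ℝ) * τ := by
    intro i ω
    calc (∑ j, X i j ω) ≤ ∑ _j : Fin (n i), τ :=
          Finset.sum_le_sum fun j _ => (hXbdd i j ω).2
      _ = (n i : ℝ) * τ := by simp [Finset.sum_const, nsmul_eq_mul]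
  have hTmeas : Measurable T := by
    apply Finset.measurable_sum
    intro i _
    exact ((Finset.measurable_sum _ fun j _ => hXmeas i j).const_mul lam).exp
  set B : ℝ := ∑ i : Fin m, Real.exp (lam * ((n i : ℝ) * τ)) with hBdef
  have hTleB : ∀ ω, T ω ≤ B := by
    intro ω
    refine Finset.sum_le_sum fun i _ => Real.exp_le_exp.2 ?_
    exact mul_le_mul_of_nonneg_left (hSleB i ω) hlam.le
  have hTgem : ∀ ω, (m : ℝ) ≤ T ω := by
    intro ω
    calc (m : ℝ) = ∑ _i : Fin m, (1 : ℝ) := by simp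
      _ ≤ T ω := Finset.sum_le_sum fun i _ =>
          Real.one_le_exp (mul_nonneg hlam.le (hSnonneg i ω))
  have hTpos : ∀ ω, 0 < T ω := fun ω => lt_of_lt_of_le (by linarith) (hTgem ω)
  have hBgem : (m : ℝ) ≤ B := by
    calc (m : ℝ) = ∑ _i : Fin m, (1 : ℝ) := by simp
      _ ≤ B := Finset.sum_le_sum fun i _ => Real.one_le_exp
          (mul_nonneg hlam.le (mul_nonneg (Nat.cast_nonneg _) hτ.le))
  have hexpintS : ∀ i, Integrable (fun ω => Real.exp (lam * ∑ j, X i j ω)) := by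
    intro i
    refine (integrable_const (Real.exp (lam * ((n i : ℝ) * τ)))).mono'
      (((Finset.measurable_sum _ fun j _ => hXmeas i j).const_mul lam).exp).aestronglyMeasurable
      (ae_of_all _ fun ω => ?_)
    rw [Real.norm_eq_abs, abs_of_nonneg (Real.exp_pos _).le]
    exact Real.exp_le_exp.2 (mul_le_mul_of_nonneg_left (hSleB i ω) hlam.le)
  have hTint : Integrable T := integrable_finset_sum _ fun i _ => hexpintS i
  set c : ℝ := ∫ ω, T ω with hcdef
  have hintT_le : c ≤ (m : ℝ) * (m : ℝ) := by
    rw [hcdef, hTdef]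
    rw [integral_finset_sum _ fun i _ => hexpintS i]
    calc (∑ i : Fin m, ∫ ω, Real.exp (lam * ∑ j, X i j ω))
        ≤ ∑ _i : Fin m, (m : ℝ) := Finset.sum_le_sum fun i _ => key i
      _ = (m : ℝ) * (m : ℝ) := by simp [mul_comm]
  have hc_ge : (m : ℝ) ≤ c := by
    calc (m : ℝ) = ∫ _ω : Ω, (m : ℝ) := by simp
      _ ≤ c := integral_mono (integrable_const _) hTint hTgem
  have hc_pos : 0 < c := lt_of_lt_of_le (by linarith) hc_ge
  have hlogTint : Integrable (fun ω => Real.log (T ω)) := by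
    refine (integrable_const (Real.log B)).mono'
      (Real.measurable_log.comp hTmeas).aestronglyMeasurable (ae_of_all _ fun ω => ?_)
    have h1 : 0 ≤ Real.log (T ω) :=
      Real.log_nonneg (le_trans (by linarith) (hTgem ω))
    rw [Real.norm_eq_abs, abs_of_nonneg h1]
    exact Real.log_le_log (hTpos ω) (hTleB ω)
  -- Jensen via tangent line: ∫ log T ≤ log c
  have hjensen : (∫ ω, Real.log (T ω)) ≤ Real.log c := by
    have hptlog : ∀ ω, Real.log (T ω) ≤ T ω / c - 1 + Real.log c := by
      intro ω
      have h1 := Real.log_le_sub_one_of_pos (div_pos (hTpos ω) hc_pos)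
      rw [Real.log_div (ne_of_gt (hTpos ω)) (ne_of_gt hc_pos)] at h1
      linarith
    have hrint : Integrable (fun ω => T ω / c - 1 + Real.log c) :=
      ((hTint.div_const c).sub (integrable_const 1)).add (integrable_const _)
    have h2 : (∫ ω, Real.log (T ω)) ≤ ∫ ω, (T ω / c - 1 + Real.log c) :=
      integral_mono hlogTint hrint hptlog
    have h3 : (∫ ω, (T ω / c - 1 + Real.log c)) = c / c - 1 + Real.log c := by
      have hi1 : Integrable (fun ω => T ω / c - 1) := (hTint.div_const c).sub (integrable_const 1)
      have hi2 : Integrable (fun ω => T ω / c) := hTint.div_const c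
      rw [integral_add hi1 (integrable_const _), integral_sub hi2 (integrable_const 1),
        integral_div, integral_const, integral_const]
      simp [hcdef]
    rw [h3, div_self (ne_of_gt hc_pos)] at h2
    linarith
  have hlogc : Real.log c ≤ 2 * Real.log m := by
    calc Real.log c ≤ Real.log ((m : ℝ) * (m : ℝ)) := Real.log_le_log hc_pos hintT_le
      _ = 2 * Real.log m := by
          rw [Real.log_mul (by linarith) (by linarith)]; ring
  -- pointwise softmax bound
  have : Nonempty (Fin m) := ⟨⟨0, by omega⟩⟩
  have hsup_le : ∀ ω, (⨆ i, ∑ j, X i j ω) ≤ lam⁻¹ * Real.log (T ω) := by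
    intro ω
    refine ciSup_le fun i => ?_
    have h1 : lam * (∑ j, X i j ω) ≤ Real.log (T ω) := by
      calc lam * (∑ j, X i j ω)
          = Real.log (Real.exp (lam * ∑ j, X i j ω)) := (Real.log_exp _).symm
        _ ≤ Real.log (T ω) := Real.log_le_log (Real.exp_pos _)
            (Finset.single_le_sum (f := fun k => Real.exp (lam * ∑ j, X k j ω))
              (fun k _ => (Real.exp_pos _).le) (Finset.mem_univ i))
    calc (∑ j, X i j ω) = lam⁻¹ * (lam * ∑ j, X i j ω) := by
          field_simp
      _ ≤ lam⁻¹ * Real.log (T ω) :=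
          mul_le_mul_of_nonneg_left h1 (inv_nonneg.2 hlam.le)
  have hsup_nonneg : ∀ ω, 0 ≤ ⨆ i, ∑ j, X i j ω := by
    intro ω
    have i0 : Fin m := ⟨0, by omega⟩
    calc (0 : ℝ) ≤ ∑ j, X i0 j ω := hSnonneg i0 ω
      _ ≤ ⨆ i, ∑ j, X i j ω :=
          le_ciSup (f := fun i : Fin m => ∑ j, X i j ω) (Set.Finite.bddAbove (Set.finite_range _)) i0
  have hgint : Integrable (fun ω => lam⁻¹ * Real.log (T ω)) := hlogTint.const_mul _
  have hmain : (∫ ω, ⨆ i, ∑ j, X i j ω) ≤ lam⁻¹ * ∫ ω, Real.log (T ω) := by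
    calc (∫ ω, ⨆ i, ∑ j, X i j ω) ≤ ∫ ω, lam⁻¹ * Real.log (T ω) :=
          integral_mono_of_nonneg (ae_of_all _ hsup_nonneg) hgint (ae_of_all _ hsup_le)
      _ = lam⁻¹ * ∫ ω, Real.log (T ω) := integral_const_mul _ _
  have hfin : lam⁻¹ * (∫ ω, Real.log (T ω)) ≤ lam⁻¹ * (2 * Real.log m) := by
    exact mul_le_mul_of_nonneg_left (le_trans hjensen hlogc) (inv_nonneg.2 hlam.le)
  have heq : lam⁻¹ * (2 * Real.log m) = 2 * τ * (Real.log m / L) := by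
    rw [hlamdef, inv_div]
    field_simp
  calc (∫ ω, ⨆ i, ∑ j, X i j ω) ≤ lam⁻¹ * ∫ ω, Real.log (T ω) := hmain
    _ ≤ lam⁻¹ * (2 * Real.log m) := hfin
    _ = 2 * τ * (Real.log m / L) := heq
end

section
/- For every constant C₁ > 0 there exists a constant C₂ > 0 such that the following holds. Let m ≥ 2, let τ > 0, and let S_1, …, S_m be random variables on a common probability space such that each S_i = Σ_{j=1}^{n_i} X_{ij} is a finite sum of mutually independent random variables X_{ij} taking values in the interval [0, τ], and E[S_i] ≤ C₁ · τ · log m for every i. Then E[max_{1 ≤ i ≤ m} S_i] ≤ C₂ · τ · log m. -/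
/-!
Exponential-moment (soft-max) argument at inverse temperature `1/τ`. Pointwise,
`exp (max_i S_i / τ) ≤ ∑_i exp (S_i / τ)`, so by Jensen `exp (E[max_i S_i] / τ)` is at most
`∑_i E[exp (S_i / τ)]`. By convexity of `exp`, a `[0, τ]`-valued `X` has
`E[exp (X / τ)] ≤ 1 + (e - 1) E[X] / τ ≤ exp ((e - 1) E[X] / τ)`, and independence makes these
bounds multiply, so each `E[exp (S_i / τ)] ≤ exp ((e - 1) C₁ log m) ≤ m ^ (2 C₁)`.
Hence `E[max_i S_i] ≤ τ log (m · m ^ (2 C₁)) = (1 + 2 C₁) τ log m`.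
-/

open MeasureTheory ProbabilityTheory Real

section SoftMax

variable {ι : Type*} [Fintype ι] [Nonempty ι]

lemma exp_mul_iSup_le_sum_exp (t : ℝ) (s : ι → ℝ) : exp (t * ⨆ i, s i) ≤ ∑ i, exp (t * s i) := by
  obtain ⟨i, hi⟩ := exists_eq_ciSup_of_finite (f := s)
  rw [← hi]
  exact Finset.single_le_sum (f := fun i => exp (t * s i)) (fun _ _ => (exp_pos _).le)
    (Finset.mem_univ i)

lemma abs_iSup_le_sum_abs (s : ι → ℝ) : |⨆ i, s i| ≤ ∑ i, |s i| := by
  obtain ⟨i, hi⟩ := exists_eq_ciSup_of_finite (f := s)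
  rw [← hi]
  exact Finset.single_le_sum (f := fun i => |s i|) (fun _ _ => abs_nonneg _) (Finset.mem_univ i)

variable {Ω : Type*} [MeasurableSpace Ω] {μ : Measure Ω} {S : ι → Ω → ℝ}

lemma integrable_iSup (hS : ∀ i, Integrable (S i) μ) : Integrable (fun ω => ⨆ i, S i ω) μ :=
  (integrable_finsetSum _ fun i _ => (hS i).abs).mono'
    (AEMeasurable.iSup fun i => (hS i).aemeasurable).aestronglyMeasurable
    (ae_of_all _ fun ω => by simpa only [Real.norm_eq_abs] using abs_iSup_le_sum_abs (S · ω))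

theorem exp_mul_integral_iSup_le_sum_mgf [IsProbabilityMeasure μ] (hS : ∀ i, Integrable (S i) μ)
    (t : ℝ) (hexp : ∀ i, Integrable (fun ω => exp (t * S i ω)) μ) :
    exp (t * ∫ ω, ⨆ i, S i ω ∂μ) ≤ ∑ i, mgf (S i) μ t := by
  have hsum : Integrable (fun ω => ∑ i, exp (t * S i ω)) μ :=
    integrable_finsetSum _ fun i _ => hexp i
  have hexp_sup : Integrable (fun ω => exp (t * ⨆ i, S i ω)) μ :=
    hsum.mono' (continuous_exp.comp_aestronglyMeasurable
      ((integrable_iSup hS).aestronglyMeasurable.const_mul t))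
      (ae_of_all _ fun ω => by
        simpa only [Real.norm_eq_abs, abs_exp] using exp_mul_iSup_le_sum_exp t (S · ω))
  calc exp (t * ∫ ω, ⨆ i, S i ω ∂μ) = exp (∫ ω, t * ⨆ i, S i ω ∂μ) := by
        rw [integral_const_mul]
    _ ≤ ∫ ω, exp (t * ⨆ i, S i ω) ∂μ :=
        convexOn_exp.map_integral_le continuousOn_exp isClosed_univ
          (ae_of_all _ fun _ => Set.mem_univ _) ((integrable_iSup hS).const_mul t) hexp_sup
    _ ≤ ∫ ω, ∑ i, exp (t * S i ω) ∂μ :=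
        integral_mono hexp_sup hsum fun ω => exp_mul_iSup_le_sum_exp t (S · ω)
    _ = ∑ i, mgf (S i) μ t := integral_finsetSum _ fun i _ => hexp i

end SoftMax

section BoundedSummands

variable {Ω : Type*} [MeasurableSpace Ω] {μ : Measure Ω} {τ : ℝ}

lemma exp_mul_le_one_add_mul_of_mem_Icc (hτ : 0 < τ) (t : ℝ) {x : ℝ} (hx : x ∈ Set.Icc 0 τ) :
    exp (t * x) ≤ 1 + (exp (t * τ) - 1) * (x / τ) := by
  have hu₀ : 0 ≤ x / τ := div_nonneg hx.1 hτ.le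
  have hu₁ : x / τ ≤ 1 := (div_le_one hτ).2 hx.2
  have h := convexOn_exp.2 (Set.mem_univ 0) (Set.mem_univ (t * τ)) (sub_nonneg.2 hu₁) hu₀
    (sub_add_cancel 1 (x / τ))
  have hx_eq : (1 - x / τ) • (0 : ℝ) + (x / τ) • (t * τ) = t * x := by
    rw [smul_eq_mul, smul_eq_mul, mul_zero, zero_add]
    field_simp
  rw [hx_eq, smul_eq_mul, smul_eq_mul, exp_zero] at h
  linarith

lemma mgf_le_exp_of_mem_Icc [IsProbabilityMeasure μ] {X : Ω → ℝ} (hX : AEMeasurable X μ)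
    (hτ : 0 < τ) (hXτ : ∀ᵐ ω ∂μ, X ω ∈ Set.Icc 0 τ) (t : ℝ) :
    mgf X μ t ≤ exp ((exp (t * τ) - 1) / τ * ∫ ω, X ω ∂μ) := by
  have hX_int : Integrable X μ := .of_mem_Icc 0 τ hX hXτ
  have hchord_int : Integrable (fun ω => 1 + (exp (t * τ) - 1) * (X ω / τ)) μ :=
    (integrable_const 1).add ((hX_int.div_const τ).const_mul _)
  calc mgf X μ t ≤ ∫ ω, 1 + (exp (t * τ) - 1) * (X ω / τ) ∂μ :=
        integral_mono_ae (integrable_exp_mul_of_mem_Icc hX hXτ) hchord_int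
          (hXτ.mono fun ω hω => exp_mul_le_one_add_mul_of_mem_Icc hτ t hω)
    _ = (exp (t * τ) - 1) / τ * ∫ ω, X ω ∂μ + 1 := by
        rw [integral_add (integrable_const 1) ((hX_int.div_const τ).const_mul _),
          integral_const_mul, integral_div, integral_const, probReal_univ, one_smul]
        ring
    _ ≤ exp ((exp (t * τ) - 1) / τ * ∫ ω, X ω ∂μ) := add_one_le_exp _

lemma mgf_sum_le_exp_of_mem_Icc {ι : Type*} [Fintype ι] {X : ι → Ω → ℝ}
    (hindep : iIndepFun X μ) (hX : ∀ j, Measurable (X j)) (hτ : 0 < τ)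
    (hXτ : ∀ j, ∀ᵐ ω ∂μ, X j ω ∈ Set.Icc 0 τ) (t : ℝ) :
    mgf (fun ω => ∑ j, X j ω) μ t ≤ exp ((exp (t * τ) - 1) / τ * ∫ ω, ∑ j, X j ω ∂μ) := by
  have := hindep.isProbabilityMeasure
  have hX_int (j : ι) : Integrable (X j) μ := .of_mem_Icc 0 τ (hX j).aemeasurable (hXτ j)
  calc mgf (fun ω => ∑ j, X j ω) μ t = ∏ j, mgf (X j) μ t := by
        rw [← hindep.mgf_sum hX, Finset.sum_fn]
    _ ≤ ∏ j, exp ((exp (t * τ) - 1) / τ * ∫ ω, X j ω ∂μ) :=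
        Finset.prod_le_prod (fun _ _ => mgf_nonneg)
          fun j _ => mgf_le_exp_of_mem_Icc (hX j).aemeasurable hτ (hXτ j) t
    _ = exp ((exp (t * τ) - 1) / τ * ∫ ω, ∑ j, X j ω ∂μ) := by
        rw [← exp_sum, ← Finset.mul_sum, integral_finsetSum _ fun j _ => hX_int j]

end BoundedSummands

/-- For every constant `C₁ > 0` there is a constant `C₂ > 0` such that: for `m ≥ 2`,
`τ > 0`, and random variables `S i = ∑ j, X i j` (each a finite sum of mutually
independent random variables with values in `[0, τ]`) with `E[S i] ≤ C₁ · τ · log m`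
for every `i`, we have `E[max_i S i] ≤ C₂ · τ · log m`. -/
theorem stmt1 :
    ∀ C₁ : ℝ, 0 < C₁ →
      ∃ C₂ : ℝ, 0 < C₂ ∧
        ∀ (Ω : Type) [MeasureSpace Ω] [IsProbabilityMeasure (ℙ : Measure Ω)]
          (m : ℕ), 2 ≤ m →
          ∀ (τ : ℝ), 0 < τ →
          ∀ (n : Fin m → ℕ) (X : (i : Fin m) → Fin (n i) → Ω → ℝ),
            (∀ i j, Measurable (X i j)) →
            (∀ i, iIndepFun (X i) ℙ) →
            (∀ i j ω, X i j ω ∈ Set.Icc (0 : ℝ) τ) →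
            (∀ i, (∫ ω, ∑ j, X i j ω) ≤ C₁ * τ * Real.log m) →
            (∫ ω, ⨆ i, ∑ j, X i j ω) ≤ C₂ * τ * Real.log m := by
  intro C₁ hC₁
  refine ⟨1 + 2 * C₁, by positivity, ?_⟩
  intro Ω _ _ m hm τ hτ n X hX_meas hX_indep hXτ hS_mean
  have : Nonempty (Fin m) := ⟨⟨0, by omega⟩⟩
  have hlog_m : 0 ≤ log m := log_nonneg (by exact_mod_cast (by omega : 1 ≤ m))
  have hS_int (i : Fin m) : Integrable (fun ω => ∑ j, X i j ω) :=
    integrable_finsetSum _ fun j _ =>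
      .of_mem_Icc 0 τ (hX_meas i j).aemeasurable (ae_of_all _ (hXτ i j))
  have hS_exp_int (i : Fin m) : Integrable (fun ω => exp (τ⁻¹ * ∑ j, X i j ω)) := by
    simpa only [Finset.sum_apply] using (hX_indep i).integrable_exp_mul_sum (hX_meas i)
      fun j _ => integrable_exp_mul_of_mem_Icc (hX_meas i j).aemeasurable (ae_of_all _ (hXτ i j))
  have hS_mgf (i : Fin m) : mgf (fun ω => ∑ j, X i j ω) ℙ τ⁻¹ ≤ exp (2 * C₁ * log m) := by
    refine (mgf_sum_le_exp_of_mem_Icc (hX_indep i) (hX_meas i) hτ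
      (fun j => ae_of_all _ (hXτ i j)) τ⁻¹).trans (exp_le_exp.2 ?_)
    have he : exp 1 - 1 ≤ 2 := by linarith [exp_one_lt_d9]
    calc (exp (τ⁻¹ * τ) - 1) / τ * ∫ ω, ∑ j, X i j ω
        ≤ (exp 1 - 1) / τ * (C₁ * τ * log m) := by
          rw [inv_mul_cancel₀ hτ.ne']
          exact mul_le_mul_of_nonneg_left (hS_mean i)
            (div_nonneg (sub_nonneg.2 (one_le_exp zero_le_one)) hτ.le)
      _ = (exp 1 - 1) * (C₁ * log m) := by field_simp
      _ ≤ 2 * C₁ * log m := by nlinarith [mul_nonneg hC₁.le hlog_m]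
  have hmax : τ⁻¹ * ∫ ω, ⨆ i, ∑ j, X i j ω ≤ (1 + 2 * C₁) * log m := by
    rw [← exp_le_exp]
    calc exp (τ⁻¹ * ∫ ω, ⨆ i, ∑ j, X i j ω)
        ≤ ∑ i, mgf (fun ω => ∑ j, X i j ω) ℙ τ⁻¹ :=
          exp_mul_integral_iSup_le_sum_mgf hS_int τ⁻¹ hS_exp_int
      _ ≤ ∑ _i : Fin m, exp (2 * C₁ * log m) := Finset.sum_le_sum fun i _ => hS_mgf i
      _ = exp ((1 + 2 * C₁) * log m) := by
          rw [Finset.sum_const, Finset.card_univ, Fintype.card_fin, nsmul_eq_mul, add_mul,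
            one_mul, exp_add, exp_log (by exact_mod_cast (by omega : 0 < m))]
  rw [inv_mul_le_iff₀ hτ] at hmax
  linarith
end

section
/- There exists an absolute constant C > 0 such that the following holds. Let c_1, …, c_m be natural numbers with c_i ≥ 1 for all i and c_i ≥ (3/2) · c_{i+1} for all 1 ≤ i < m, let τ > 0, and let S_1, …, S_m be random variables on a common probability space such that each S_i = Σ_{j=1}^{n_i} X_{ij} is a finite sum of mutually independent random variables X_{ij} taking values in the interval [0, τ], and E[S_i] ≤ c_i · τ for every i. Then E[max_{1 ≤ i ≤ m} S_i / c_i] ≤ C · τ. -/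
open MeasureTheory ProbabilityTheory Real

lemma my_int_bdd {Ω : Type} [MeasureSpace Ω] [IsProbabilityMeasure (ℙ : Measure Ω)]
    {f : Ω → ℝ} (hf : Measurable f) (C : ℝ) (h : ∀ ω, |f ω| ≤ C) : Integrable f ℙ :=
  ⟨hf.aestronglyMeasurable, HasFiniteIntegral.of_bounded (C := C) (ae_of_all _ (by simpa [Real.norm_eq_abs] using h))⟩

-- convexity pointwise bound

lemma my_exp_le {t τ x : ℝ} (hτ : 0 < τ) (hx : x ∈ Set.Icc 0 τ) :
    exp (t * x) ≤ 1 + (exp (t * τ) - 1) * (x / τ) := by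
  obtain ⟨hx0, hxτ⟩ := hx
  have hl0 : 0 ≤ x / τ := div_nonneg hx0 hτ.le
  have hl1 : x / τ ≤ 1 := (div_le_one hτ).2 hxτ
  have key := convexOn_exp.2 (Set.mem_univ (t * 0)) (Set.mem_univ (t * τ))
    (by linarith : (0:ℝ) ≤ 1 - x / τ) hl0 (by ring)
  have hx' : (1 - x / τ) • (t * 0) + (x / τ) • (t * τ) = t * x := by
    simp only [smul_eq_mul, mul_zero, zero_add]
    rw [div_mul_eq_mul_div, div_eq_iff hτ.ne']; ring
  rw [hx'] at key
  have : exp (t * 0) = 1 := by simp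
  rw [smul_eq_mul, smul_eq_mul, this] at key
  nlinarith [key]

lemma my_mgf_single {Ω : Type} [MeasureSpace Ω] [IsProbabilityMeasure (ℙ : Measure Ω)]
    {X : Ω → ℝ} (hm : Measurable X) {τ t : ℝ} (hτ : 0 < τ) (ht : 0 ≤ t)
    (hIcc : ∀ ω, X ω ∈ Set.Icc 0 τ) :
    mgf X ℙ t ≤ exp ((exp (t * τ) - 1) * ((∫ ω, X ω) / τ)) := by
  have hXint : Integrable X ℙ := my_int_bdd hm τ (fun ω => by
    have := hIcc ω; rw [abs_le]; constructor <;> [linarith [(hIcc ω).1]; exact (hIcc ω).2])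
  have hEint : Integrable (fun ω => exp (t * X ω)) ℙ := my_int_bdd (by measurability)
    (exp (t * τ)) (fun ω => by
      rw [abs_of_nonneg (exp_nonneg _)]
      exact exp_le_exp.2 (mul_le_mul_of_nonneg_left (hIcc ω).2 ht))
  have h1 : mgf X ℙ t ≤ ∫ ω, (1 + (exp (t * τ) - 1) * (X ω / τ)) := by
    refine integral_mono hEint ?_ (fun ω => my_exp_le hτ (hIcc ω))
    exact (integrable_const 1).add ((hXint.div_const τ).const_mul _)
  have h2 : (∫ ω, (1 + (exp (t * τ) - 1) * (X ω / τ))) =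
      1 + (exp (t * τ) - 1) * ((∫ ω, X ω) / τ) := by
    rw [integral_add (integrable_const 1) ((hXint.div_const τ).const_mul _)]
    rw [MeasureTheory.integral_const_mul, MeasureTheory.integral_div]; simp
  rw [h2] at h1
  refine h1.trans ?_
  have := Real.add_one_le_exp ((exp (t * τ) - 1) * ((∫ ω, X ω) / τ))
  linarith

lemma my_chernoff {Ω : Type} [MeasureSpace Ω] [IsProbabilityMeasure (ℙ : Measure Ω)]
    {n : ℕ} {X : Fin n → Ω → ℝ} (hm : ∀ j, Measurable (X j))
    (hind : iIndepFun X ℙ) {τ : ℝ} (hτ : 0 < τ)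
    (hIcc : ∀ j ω, X j ω ∈ Set.Icc 0 τ) {c : ℝ} (hc : 0 ≤ c)
    (hmean : (∫ ω, ∑ j, X j ω) ≤ c * τ) {a : ℝ} (ha : 0 ≤ a) :
    (ℙ {ω | a * τ ≤ ∑ j, X j ω}).toReal ≤ exp (3 * c - a * Real.log 4) := by
  set t : ℝ := Real.log 4 / τ with ht_def
  have hlog4 : 0 < Real.log 4 := Real.log_pos (by norm_num)
  have ht : 0 ≤ t := div_nonneg hlog4.le hτ.le
  have htτ : t * τ = Real.log 4 := div_mul_cancel₀ _ hτ.ne'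
  have hexptτ : exp (t * τ) = 4 := by rw [htτ, Real.exp_log]; norm_num
  -- integrability of each X j
  have hXint : ∀ j, Integrable (X j) ℙ := fun j => my_int_bdd (hm j) τ (fun ω => by
    rw [abs_le]; exact ⟨by linarith [(hIcc j ω).1], (hIcc j ω).2⟩)
  -- S as a pi-sum function
  have hSfun : (fun ω => ∑ j, X j ω) = ∑ j, X j := by
    ext ω; simp [Finset.sum_apply]
  have hSmeas : Measurable (fun ω => ∑ j, X j ω) := by
    apply Finset.measurable_sum; intro j _; exact hm j
  have hSbd : ∀ ω, (0:ℝ) ≤ ∑ j, X j ω ∧ (∑ j, X j ω) ≤ n * τ := fun ω =>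
    ⟨Finset.sum_nonneg fun j _ => (hIcc j ω).1, by
      calc (∑ j, X j ω) ≤ ∑ _j : Fin n, τ := Finset.sum_le_sum fun j _ => (hIcc j ω).2
        _ = n * τ := by simp [Finset.sum_const, mul_comm]⟩
  have hint : Integrable (fun ω => exp (t * (∑ j, X j ω))) ℙ := by
    refine my_int_bdd (by measurability) (exp (t * (n * τ))) (fun ω => ?_)
    rw [abs_of_nonneg (exp_nonneg _)]
    exact exp_le_exp.2 (mul_le_mul_of_nonneg_left (hSbd ω).2 ht)
  have hcher := measure_ge_le_exp_mul_mgf (X := fun ω => ∑ j, X j ω) (μ := ℙ) (a * τ) ht hint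
  refine hcher.trans ?_
  -- bound mgf
  have hmgf : mgf (fun ω => ∑ j, X j ω) ℙ t ≤ exp (3 * c) := by
    rw [hSfun, hind.mgf_sum hm]
    have hstep : ∀ j : Fin n, mgf (X j) ℙ t ≤ exp ((exp (t * τ) - 1) * ((∫ ω, X j ω) / τ)) :=
      fun j => my_mgf_single (hm j) hτ ht (hIcc j)
    calc (∏ j, mgf (X j) ℙ t) ≤ ∏ j, exp ((exp (t * τ) - 1) * ((∫ ω, X j ω) / τ)) :=
          Finset.prod_le_prod (fun j _ => mgf_nonneg) (fun j _ => hstep j)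
      _ = exp (∑ j, (exp (t * τ) - 1) * ((∫ ω, X j ω) / τ)) := by rw [Real.exp_sum]
      _ ≤ exp (3 * c) := by
          apply Real.exp_le_exp.2
          have hsum : (∑ j, (exp (t * τ) - 1) * ((∫ ω, X j ω) / τ))
              = 3 * ((∫ ω, ∑ j, X j ω) / τ) := by
            rw [integral_finset_sum _ (fun j _ => hXint j), hexptτ]
            rw [Finset.sum_div, Finset.mul_sum]
            norm_num
          rw [hsum]
          have : (∫ ω, ∑ j, X j ω) / τ ≤ c := (div_le_iff₀ hτ).2 hmean
          linarith
  calc exp (-t * (a * τ)) * mgf (fun ω => ∑ j, X j ω) ℙ t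
      ≤ exp (-t * (a * τ)) * exp (3 * c) := by
        exact mul_le_mul_of_nonneg_left hmgf (exp_nonneg _)
    _ = exp (3 * c - a * Real.log 4) := by
        rw [← Real.exp_add]; congr 1
        have : -t * (a * τ) = -(a * (t * τ)) := by ring
        rw [this, htτ]; ring

lemma my_layer (n : ℕ) {K y : ℝ} (hK : 0 ≤ K) (hy : y ≤ n) :
    max (y - K) 0 ≤ ∑ k ∈ Finset.range (n + 1), (if K + (k:ℝ) ≤ y then (1:ℝ) else 0) := by
  rcases le_or_gt y K with h | h
  · rw [max_eq_right (by linarith)]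
    exact Finset.sum_nonneg fun k _ => by positivity
  · rw [max_eq_left (by linarith)]
    set k0 : ℕ := ⌊y - K⌋₊ with hk0
    have hyK : 0 ≤ y - K := by linarith
    have hk0le : k0 ≤ n := by
      have : y - K ≤ n := by linarith
      exact Nat.floor_le_of_le this |>.trans (by simp)
    have hsub : Finset.range (k0 + 1) ⊆ Finset.range (n + 1) :=
      Finset.range_subset_range.2 (by omega)
    have h1 : ∀ k ∈ Finset.range (k0 + 1), (if K + (k:ℝ) ≤ y then (1:ℝ) else 0) = 1 := by
      intro k hk
      rw [if_pos]
      have hk' : k ≤ k0 := Nat.lt_succ_iff.1 (Finset.mem_range.1 hk)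
      have : (k : ℝ) ≤ y - K := le_trans (by exact_mod_cast hk') (Nat.floor_le hyK)
      linarith
    have h2 : (∑ k ∈ Finset.range (k0 + 1), (if K + (k:ℝ) ≤ y then (1:ℝ) else 0)) = k0 + 1 := by
      rw [Finset.sum_congr rfl h1]; simp
    have h3 : (∑ k ∈ Finset.range (k0 + 1), (if K + (k:ℝ) ≤ y then (1:ℝ) else 0))
        ≤ ∑ k ∈ Finset.range (n + 1), (if K + (k:ℝ) ≤ y then (1:ℝ) else 0) :=
      Finset.sum_le_sum_of_subset_of_nonneg hsub (fun k _ _ => by positivity)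
    have h4 : y - K < k0 + 1 := Nat.lt_floor_add_one _
    push_cast at h2
    linarith

lemma my_tail {Ω : Type} [MeasureSpace Ω] [IsProbabilityMeasure (ℙ : Measure Ω)]
    {n : ℕ} {X : Fin n → Ω → ℝ} (hm : ∀ j, Measurable (X j))
    (hind : iIndepFun X ℙ) {τ : ℝ} (hτ : 0 < τ)
    (hIcc : ∀ j ω, X j ω ∈ Set.Icc 0 τ) {c : ℕ} (hc : 1 ≤ c)
    (hmean : (∫ ω, ∑ j, X j ω) ≤ c * τ) :
    (∫ ω, max ((∑ j, X j ω) / c - 4 * τ) 0) ≤ 2 * exp (-(c:ℝ)) * τ := by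
  have hcR : (1:ℝ) ≤ c := by exact_mod_cast hc
  have hc0 : (0:ℝ) < c := by linarith
  have hcτ : 0 < (c:ℝ) * τ := mul_pos hc0 hτ
  have hSmeas : Measurable (fun ω => ∑ j, X j ω) :=
    Finset.measurable_sum _ (fun j _ => hm j)
  have hSbd : ∀ ω, (0:ℝ) ≤ ∑ j, X j ω ∧ (∑ j, X j ω) ≤ n * τ := fun ω =>
    ⟨Finset.sum_nonneg fun j _ => (hIcc j ω).1, by
      calc (∑ j, X j ω) ≤ ∑ _j : Fin n, τ := Finset.sum_le_sum fun j _ => (hIcc j ω).2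
        _ = n * τ := by simp [Finset.sum_const, mul_comm]⟩
  set A : ℕ → Set Ω := fun k => {ω | ((4:ℝ) + k) * c * τ ≤ ∑ j, X j ω} with hA
  have hAmeas : ∀ k, MeasurableSet (A k) := fun k =>
    measurableSet_le measurable_const hSmeas
  -- pointwise bound
  have hpt : ∀ ω, max ((∑ j, X j ω) / c - 4 * τ) 0
      ≤ ∑ k ∈ Finset.range (n + 1), (A k).indicator (fun _ => τ) ω := by
    intro ω
    set y : ℝ := (∑ j, X j ω) / (c * τ) with hy
    have hyn : y ≤ n := by
      rw [hy, div_le_iff₀ hcτ]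
      calc (∑ j, X j ω) ≤ n * τ := (hSbd ω).2
        _ ≤ n * (c * τ) := mul_le_mul_of_nonneg_left (le_mul_of_one_le_left hτ.le hcR) (Nat.cast_nonneg n)
    have key := my_layer n (K := 4) (y := y) (by norm_num) hyn
    have hmul := mul_le_mul_of_nonneg_left key hτ.le
    calc max ((∑ j, X j ω) / c - 4 * τ) 0 = τ * max (y - 4) 0 := by
          rw [mul_max_of_nonneg _ _ hτ.le, mul_zero]
          congr 1
          rw [hy]
          field_simp
      _ ≤ τ * ∑ k ∈ Finset.range (n + 1), (if 4 + (k:ℝ) ≤ y then (1:ℝ) else 0) := hmul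
      _ = ∑ k ∈ Finset.range (n + 1), (A k).indicator (fun _ => τ) ω := by
          rw [Finset.mul_sum]
          refine Finset.sum_congr rfl (fun k _ => ?_)
          rw [Set.indicator_apply]
          have hiff : ω ∈ A k ↔ 4 + (k:ℝ) ≤ y := by
            rw [hA]
            simp only [Set.mem_setOf_eq, hy]
            rw [le_div_iff₀ hcτ, mul_assoc]
          by_cases hω : ω ∈ A k
          · rw [if_pos hω, if_pos (hiff.1 hω), mul_one]
          · rw [if_neg hω, if_neg (fun h => hω (hiff.2 h)), mul_zero]
  -- integrate
  have hindint : ∀ k, Integrable ((A k).indicator (fun _ => τ)) ℙ :=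
    fun k => (integrable_const τ).indicator (hAmeas k)
  have hint : (∫ ω, max ((∑ j, X j ω) / c - 4 * τ) 0)
      ≤ ∑ k ∈ Finset.range (n + 1), (ℙ (A k)).toReal * τ := by
    calc (∫ ω, max ((∑ j, X j ω) / c - 4 * τ) 0)
        ≤ ∫ ω, ∑ k ∈ Finset.range (n + 1), (A k).indicator (fun _ => τ) ω := by
          refine integral_mono_of_nonneg (ae_of_all _ (fun ω => le_max_right _ _))
            (integrable_finset_sum _ (fun k _ => hindint k)) (ae_of_all _ hpt)
      _ = ∑ k ∈ Finset.range (n + 1), (ℙ (A k)).toReal * τ := by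
          rw [integral_finset_sum _ (fun k _ => hindint k)]
          exact Finset.sum_congr rfl (fun k _ => by
            rw [integral_indicator_const _ (hAmeas k)]; simp [mul_comm, measureReal_def])
  refine hint.trans ?_
  -- apply Chernoff to each
  have hlog4 : 1 < Real.log 4 := by
    rw [Real.lt_log_iff_exp_lt (by norm_num)]
    calc exp 1 < 2.7182818286 := Real.exp_one_lt_d9
      _ < 4 := by norm_num
  have hprob : ∀ k : ℕ, (ℙ (A k)).toReal ≤ exp (-(c:ℝ)) * (4:ℝ)⁻¹ ^ k := by
    intro k
    have ha : (0:ℝ) ≤ (4 + (k:ℝ)) * c := by positivity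
    have := my_chernoff hm hind hτ hIcc hc0.le hmean (a := (4 + (k:ℝ)) * c) ha
    have hset : A k = {ω | (4 + (k:ℝ)) * c * τ ≤ ∑ j, X j ω} := rfl
    rw [hset]
    refine this.trans ?_
    have hexp : 3 * (c:ℝ) - (4 + (k:ℝ)) * c * Real.log 4 ≤ -(c:ℝ) + k * (-Real.log 4) := by
      have h1 : (c:ℝ) * (3 - 4 * Real.log 4) ≤ -(c:ℝ) := by nlinarith
      have h2 : (k:ℝ) * Real.log 4 ≤ (k:ℝ) * (c:ℝ) * Real.log 4 :=
        mul_le_mul_of_nonneg_right (le_mul_of_one_le_right (Nat.cast_nonneg k) hcR)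
          (by linarith)
      nlinarith
    calc exp (3 * (c:ℝ) - (4 + (k:ℝ)) * c * Real.log 4)
        ≤ exp (-(c:ℝ) + k * (-Real.log 4)) := exp_le_exp.2 hexp
      _ = exp (-(c:ℝ)) * (4:ℝ)⁻¹ ^ k := by
          rw [Real.exp_add]
          congr 1
          rw [Real.exp_nat_mul, Real.exp_neg, Real.exp_log (by norm_num)]
  calc (∑ k ∈ Finset.range (n + 1), (ℙ (A k)).toReal * τ)
      ≤ ∑ k ∈ Finset.range (n + 1), exp (-(c:ℝ)) * (4:ℝ)⁻¹ ^ k * τ :=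
        Finset.sum_le_sum fun k _ => mul_le_mul_of_nonneg_right (hprob k) hτ.le
    _ = exp (-(c:ℝ)) * τ * ∑ k ∈ Finset.range (n + 1), (4:ℝ)⁻¹ ^ k := by
        rw [Finset.mul_sum]; exact Finset.sum_congr rfl fun k _ => by ring
    _ ≤ 2 * exp (-(c:ℝ)) * τ := by
        have hg : (∑ k ∈ Finset.range (n + 1), (4:ℝ)⁻¹ ^ k) ≤ 2 := by
          rw [Finset.range_eq_Ico]
          refine (geom_sum_Ico_le_of_lt_one (by norm_num) (by norm_num)).trans ?_
          norm_num
        have := mul_le_mul_of_nonneg_left hg (mul_nonneg (exp_nonneg (-(c:ℝ))) hτ.le)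
        linarith

lemma my_c_lb {m : ℕ} (c : Fin m → ℕ) (h1 : ∀ i, 1 ≤ c i)
    (hstep : ∀ (i : Fin m) (h : i.val + 1 < m), (3 : ℝ) / 2 * c ⟨i.val + 1, h⟩ ≤ c i) :
    ∀ i : Fin m, m - i.val ≤ c i := by
  have hsucc : ∀ k (hk : k < m) (hk' : k + 1 < m), c ⟨k + 1, hk'⟩ + 1 ≤ c ⟨k, hk⟩ := by
    intro k hk hk'
    have hr := hstep ⟨k, hk⟩ hk'
    have h1' : (1:ℝ) ≤ (c ⟨k + 1, hk'⟩ : ℝ) := by exact_mod_cast h1 ⟨k + 1, hk'⟩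
    have : ((c ⟨k + 1, hk'⟩ : ℕ) : ℝ) < c ⟨k, hk⟩ := by linarith
    exact_mod_cast this
  have aux : ∀ d k (hk : k < m), k + d + 1 = m → d + 1 ≤ c ⟨k, hk⟩ := by
    intro d
    induction d with
    | zero => intro k hk _; exact h1 ⟨k, hk⟩
    | succ d ih =>
      intro k hk hm'
      have hk1 : k + 1 < m := by omega
      have h2 := ih (k + 1) hk1 (by omega)
      have h3 := hsucc k hk hk1
      omega
  intro i
  have hi := i.isLt
  have := aux (m - 1 - i.val) i.val hi (by omega)
  have he : (⟨i.val, hi⟩ : Fin m) = i := rfl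
  rw [he] at this
  omega

lemma my_sum_exp (m : ℕ) : ∑ i : Fin m, Real.exp (-(((m - i.val : ℕ)):ℝ)) ≤ 1 := by
  set r : ℝ := Real.exp (-1) with hr
  have h2e : (2:ℝ) ≤ Real.exp 1 := by have := Real.add_one_le_exp 1; linarith
  have hrpos : 0 < r := Real.exp_pos _
  have hrhalf : r ≤ 1 / 2 := by
    have hmul : r * Real.exp 1 = 1 := by rw [hr, ← Real.exp_add]; norm_num
    nlinarith
  have hterm : ∀ k : ℕ, Real.exp (-(k:ℝ)) = r ^ k := by
    intro k
    rw [hr, ← Real.exp_nat_mul]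
    congr 1; ring
  have h1 : (∑ i : Fin m, Real.exp (-(((m - i.val : ℕ)):ℝ)))
      = ∑ i ∈ Finset.range m, r ^ (m - i) := by
    rw [Fin.sum_univ_eq_sum_range (fun i => Real.exp (-(((m - i : ℕ)):ℝ)))]
    exact Finset.sum_congr rfl fun i _ => hterm _
  rw [h1]
  have h2 : (∑ i ∈ Finset.range m, r ^ (m - i)) = ∑ i ∈ Finset.range m, r ^ (i + 1) := by
    rw [← Finset.sum_range_reflect (fun j => r ^ (j + 1)) m]
    refine Finset.sum_congr rfl fun i hi => ?_
    have : m - 1 - i + 1 = m - i := by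
      have := Finset.mem_range.1 hi; omega
    rw [this]
  rw [h2]
  have h3 : (∑ i ∈ Finset.range m, r ^ (i + 1)) = r * ∑ i ∈ Finset.range m, r ^ i := by
    rw [Finset.mul_sum]
    exact Finset.sum_congr rfl fun i _ => by ring
  rw [h3]
  have h4 : (∑ i ∈ Finset.range m, r ^ i) ≤ 2 := by
    rw [Finset.range_eq_Ico]
    refine (geom_sum_Ico_le_of_lt_one hrpos.le (by linarith)).trans ?_
    rw [pow_zero]
    rw [div_le_iff₀ (by linarith)]
    linarith
  calc r * ∑ i ∈ Finset.range m, r ^ i ≤ r * 2 := by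
        exact mul_le_mul_of_nonneg_left h4 hrpos.le
    _ ≤ 1 := by linarith

/-- There exists an absolute constant `C > 0` such that: for natural numbers
`c 1, …, c m` with `c i ≥ 1` and `c i ≥ (3/2) · c (i+1)`, `τ > 0`, and random
variables `S i = ∑ j, X i j` (each a finite sum of mutually independent random
variables with values in `[0, τ]`) with `E[S i] ≤ c i · τ` for every `i`, we have
`E[max_i S i / c i] ≤ C · τ`. -/
theorem stmt2 :
    ∃ C : ℝ, 0 < C ∧
      ∀ (Ω : Type) [MeasureSpace Ω] [IsProbabilityMeasure (ℙ : Measure Ω)]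
        (m : ℕ) (c : Fin m → ℕ),
        (∀ i, 1 ≤ c i) →
        (∀ (i : Fin m) (h : i.val + 1 < m), (3 : ℝ) / 2 * c ⟨i.val + 1, h⟩ ≤ c i) →
        ∀ (τ : ℝ), 0 < τ →
        ∀ (n : Fin m → ℕ) (X : (i : Fin m) → Fin (n i) → Ω → ℝ),
          (∀ i j, Measurable (X i j)) →
          (∀ i, iIndepFun (X i) ℙ) →
          (∀ i j ω, X i j ω ∈ Set.Icc (0 : ℝ) τ) →
          (∀ i, (∫ ω, ∑ j, X i j ω) ≤ c i * τ) →
          (∫ ω, ⨆ i, (∑ j, X i j ω) / c i) ≤ C * τ := by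
  refine ⟨6, by norm_num, ?_⟩
  intro Ω _ _ m c h1 hstep τ hτ n X hmeas hindep hIcc hmean
  set T : Fin m → Ω → ℝ := fun i ω => max ((∑ j, X i j ω) / c i - 4 * τ) 0 with hT
  have hc1 : ∀ i, (1:ℝ) ≤ c i := fun i => by exact_mod_cast h1 i
  have hSmeas : ∀ i, Measurable (fun ω => ∑ j, X i j ω) :=
    fun i => Finset.measurable_sum _ (fun j _ => hmeas i j)
  have hSbd : ∀ i ω, (0:ℝ) ≤ ∑ j, X i j ω ∧ (∑ j, X i j ω) ≤ (n i) * τ := fun i ω =>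
    ⟨Finset.sum_nonneg fun j _ => (hIcc i j ω).1, by
      calc (∑ j, X i j ω) ≤ ∑ _j : Fin (n i), τ := Finset.sum_le_sum fun j _ => (hIcc i j ω).2
        _ = (n i) * τ := by simp [Finset.sum_const, mul_comm]⟩
  have hfbd : ∀ i ω, (0:ℝ) ≤ (∑ j, X i j ω) / c i ∧ (∑ j, X i j ω) / c i ≤ (n i) * τ :=
    fun i ω => ⟨div_nonneg (hSbd i ω).1 (by linarith [hc1 i]),
      (div_le_self (hSbd i ω).1 (hc1 i)).trans (hSbd i ω).2⟩
  have hTmeas : ∀ i, Measurable (T i) := fun i =>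
    (((hSmeas i).div_const _).sub measurable_const).max measurable_const
  have hTint : ∀ i, Integrable (T i) ℙ := fun i => by
    refine my_int_bdd (hTmeas i) ((n i) * τ + 4 * τ) (fun ω => ?_)
    rw [abs_of_nonneg (le_max_right _ _)]
    exact max_le (by linarith [(hfbd i ω).2]) (by nlinarith [(hfbd i ω).2, (hfbd i ω).1, hτ.le])
  have hTnonneg : ∀ i ω, 0 ≤ T i ω := fun i ω => le_max_right _ _
  have hRHSint : Integrable (fun ω => 4 * τ + ∑ i, T i ω) ℙ :=
    (integrable_const _).add (integrable_finset_sum _ (fun i _ => hTint i))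
  -- pointwise bound on the sup
  have hpt : ∀ ω, (⨆ i, (∑ j, X i j ω) / c i) ≤ 4 * τ + ∑ i, T i ω := by
    intro ω
    rcases Nat.eq_zero_or_pos m with hm | hm
    · subst hm
      rw [Real.iSup_of_isEmpty]
      have : 0 ≤ ∑ i : Fin 0, T i ω := Finset.sum_nonneg fun i _ => hTnonneg i ω
      linarith
    · have : Nonempty (Fin m) := ⟨⟨0, hm⟩⟩
      refine ciSup_le (fun i => ?_)
      have h1' : (∑ j, X i j ω) / c i ≤ 4 * τ + T i ω := by
        have := le_max_left ((∑ j, X i j ω) / c i - 4 * τ) 0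
        rw [hT]; dsimp only; linarith
      refine h1'.trans (by
        have := Finset.single_le_sum (f := fun i => T i ω)
          (fun i _ => hTnonneg i ω) (Finset.mem_univ i)
        linarith)
  have hptnn : ∀ ω, 0 ≤ ⨆ i, (∑ j, X i j ω) / c i := by
    intro ω
    rcases Nat.eq_zero_or_pos m with hm | hm
    · subst hm; rw [Real.iSup_of_isEmpty]
    · have : Nonempty (Fin m) := ⟨⟨0, hm⟩⟩
      refine le_trans (hfbd ⟨0, hm⟩ ω).1 ?_
      exact le_ciSup (f := fun i : Fin m => (∑ j, X i j ω) / c i)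
        (Set.Finite.bddAbove (Set.finite_range _)) (⟨0, hm⟩ : Fin m)
  -- integrate
  have hint1 : (∫ ω, ⨆ i, (∑ j, X i j ω) / c i) ≤ ∫ ω, (4 * τ + ∑ i, T i ω) :=
    integral_mono_of_nonneg (ae_of_all _ hptnn) hRHSint (ae_of_all _ hpt)
  have hint2 : (∫ ω, (4 * τ + ∑ i, T i ω)) = 4 * τ + ∑ i, ∫ ω, T i ω := by
    rw [integral_add (integrable_const _) (integrable_finset_sum _ (fun i _ => hTint i)),
      integral_finset_sum _ (fun i _ => hTint i)]
    simp
  have hlb := my_c_lb c h1 hstep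
  have hint3 : (∑ i, ∫ ω, T i ω) ≤ ∑ i : Fin m, 2 * exp (-((c i : ℕ):ℝ)) * τ :=
    Finset.sum_le_sum fun i _ =>
      my_tail (hmeas i) (hindep i) hτ (hIcc i) (h1 i) (hmean i)
  have hint4 : (∑ i : Fin m, 2 * exp (-((c i : ℕ):ℝ)) * τ) ≤ 2 * τ := by
    have hterm : ∀ i : Fin m, 2 * exp (-((c i : ℕ):ℝ)) * τ
        ≤ 2 * τ * exp (-(((m - i.val : ℕ)):ℝ)) := by
      intro i
      have hle : (((m - i.val : ℕ)):ℝ) ≤ ((c i : ℕ):ℝ) := by exact_mod_cast hlb i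
      have := Real.exp_le_exp.2 (neg_le_neg hle)
      nlinarith [exp_nonneg (-((c i : ℕ):ℝ)), hτ.le]
    calc (∑ i : Fin m, 2 * exp (-((c i : ℕ):ℝ)) * τ)
        ≤ ∑ i : Fin m, 2 * τ * exp (-(((m - i.val : ℕ)):ℝ)) :=
          Finset.sum_le_sum fun i _ => hterm i
      _ = 2 * τ * ∑ i : Fin m, exp (-(((m - i.val : ℕ)):ℝ)) := by
          rw [Finset.mul_sum]
      _ ≤ 2 * τ * 1 := by
          have := my_sum_exp m
          nlinarith [hτ.le]
      _ = 2 * τ := by ring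
  calc (∫ ω, ⨆ i, (∑ j, X i j ω) / c i) ≤ 4 * τ + ∑ i, ∫ ω, T i ω := by
        rw [← hint2]; exact hint1
    _ ≤ 4 * τ + 2 * τ := by linarith [hint3.trans hint4]
    _ = 6 * τ := by ring
end

section
/- Let X_1, …, X_n be mutually independent random variables taking values in the interval [0, 1] with Σ_{j=1}^n E[X_j] ≤ 1, and let S = Σ_{j=1}^n X_j. Then for every t ≥ 0, P(S > 1 + t) ≤ e^t / (1 + t)^t. -/
open MeasureTheory ProbabilityTheory Real

lemma exp_mul_le_aux {s x : ℝ} (hx0 : 0 ≤ x) (hx1 : x ≤ 1) :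
    Real.exp (s * x) ≤ 1 + (Real.exp s - 1) * x := by
  have h := convexOn_exp.2 (Set.mem_univ (0:ℝ)) (Set.mem_univ s)
    (by linarith : (0:ℝ) ≤ 1 - x) hx0 (by ring)
  simp only [smul_eq_mul, mul_zero, Real.exp_zero, zero_add] at h
  rw [mul_comm s x]
  nlinarith [h]

/-- Let `X 1, …, X n` be mutually independent random variables with values in `[0, 1]`
and `∑ j, E[X j] ≤ 1`, and let `S = ∑ j, X j`. Then for every `t ≥ 0`,
`P(S > 1 + t) ≤ e^t / (1 + t)^t`. -/
theorem stmt3 {Ω : Type} [MeasureSpace Ω] [IsProbabilityMeasure (ℙ : Measure Ω)]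
    {n : ℕ} (X : Fin n → Ω → ℝ)
    (hmeas : ∀ j, Measurable (X j))
    (hindep : iIndepFun X ℙ)
    (hbound : ∀ j ω, X j ω ∈ Set.Icc (0 : ℝ) 1)
    (hexp : (∑ j, ∫ ω, X j ω) ≤ 1)
    (t : ℝ) (ht : 0 ≤ t) :
    ℙ {ω | 1 + t < ∑ j, X j ω} ≤ ENNReal.ofReal (Real.exp t / (1 + t) ^ t) := by
  set s : ℝ := Real.log (1 + t) with hs
  have h1t : (0:ℝ) < 1 + t := by linarith
  have hs0 : 0 ≤ s := Real.log_nonneg (by linarith)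
  have hes : Real.exp s = 1 + t := Real.exp_log h1t
  -- integrability of exp (s * X j)
  have hint : ∀ j : Fin n, Integrable (fun ω => Real.exp (s * X j ω)) ℙ := by
    intro j
    refine (integrable_const (Real.exp s)).mono'
      ((hmeas j).const_mul s).exp.aestronglyMeasurable ?_
    filter_upwards with ω
    rw [Real.norm_eq_abs, abs_of_pos (Real.exp_pos _), Real.exp_le_exp]
    have := hbound j ω
    nlinarith [this.1, this.2]
  have hintS : Integrable (fun ω => Real.exp (s * (∑ j, X j) ω)) ℙ := by
    exact hindep.integrable_exp_mul_sum hmeas (fun i _ => hint i)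
  -- mgf bound per variable
  have hXint : ∀ j : Fin n, Integrable (X j) ℙ := by
    intro j
    refine (integrable_const (1:ℝ)).mono' (hmeas j).aestronglyMeasurable ?_
    filter_upwards with ω
    have := hbound j ω
    rw [Real.norm_eq_abs, abs_of_nonneg this.1]; exact this.2
  have hmgf : ∀ j : Fin n, mgf (X j) ℙ s ≤ Real.exp (t * ∫ ω, X j ω) := by
    intro j
    have h1 : mgf (X j) ℙ s ≤ ∫ ω, (1 + t * X j ω) := by
      refine integral_mono (hint j) ((integrable_const (1:ℝ)).add ((hXint j).const_mul t)) ?_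
      intro ω
      have := exp_mul_le_aux (s := s) (hbound j ω).1 (hbound j ω).2
      rw [hes] at this
      simpa using this.trans_eq (by ring)
    have h2 : ∫ ω, (1 + t * X j ω) = 1 + t * ∫ ω, X j ω := by
      rw [integral_add (integrable_const 1) ((hXint j).const_mul t),
        integral_const, integral_const_mul]
      simp
    calc mgf (X j) ℙ s ≤ 1 + t * ∫ ω, X j ω := h1.trans_eq h2
      _ ≤ Real.exp (t * ∫ ω, X j ω) := by
          have := Real.add_one_le_exp (t * ∫ ω, X j ω)
          linarith
  have hmgf_nonneg : ∀ j : Fin n, 0 ≤ mgf (X j) ℙ s := fun j => mgf_nonneg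
  have hmean_nonneg : ∀ j : Fin n, 0 ≤ ∫ ω, X j ω := fun j =>
    integral_nonneg (fun ω => (hbound j ω).1)
  have hprod : mgf (∑ j, X j) ℙ s ≤ Real.exp t := by
    rw [hindep.mgf_sum hmeas]
    calc ∏ j, mgf (X j) ℙ s ≤ ∏ j, Real.exp (t * ∫ ω, X j ω) :=
          Finset.prod_le_prod (fun j _ => hmgf_nonneg j) (fun j _ => hmgf j)
      _ = Real.exp (∑ j, t * ∫ ω, X j ω) := by rw [Real.exp_sum]
      _ ≤ Real.exp t := by
          rw [Real.exp_le_exp, ← Finset.mul_sum]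
          calc t * ∑ j, ∫ ω, X j ω ≤ t * 1 := by
                refine mul_le_mul_of_nonneg_left hexp ht
            _ = t := mul_one t
  have hcher := measure_ge_le_exp_mul_mgf (X := ∑ j, X j) (1 + t) hs0 hintS
  have hsub : ℙ {ω | 1 + t < ∑ j, X j ω} ≤ ℙ {ω | 1 + t ≤ (∑ j, X j) ω} := by
    refine measure_mono fun ω hω => ?_
    simp only [Set.mem_setOf_eq, Finset.sum_apply] at *
    exact hω.le
  refine hsub.trans ?_
  rw [← ENNReal.ofReal_toReal (measure_ne_top ℙ _)]
  refine ENNReal.ofReal_le_ofReal (hcher.trans ?_)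
  have key : Real.exp (-s * (1 + t)) * mgf (∑ j, X j) ℙ s ≤ Real.exp (-s * (1 + t)) * Real.exp t :=
    mul_le_mul_of_nonneg_left hprod (Real.exp_pos _).le
  refine key.trans ?_
  have hpow : Real.exp (s * (1 + t)) = (1 + t) ^ (1 + t) := by
    rw [hs, mul_comm, Real.rpow_def_of_pos h1t]; ring_nf
  rw [neg_mul, Real.exp_neg, inv_mul_eq_div, hpow]
  have hle : (1+t)^t ≤ (1+t)^(1+t) :=
    Real.rpow_le_rpow_of_exponent_le (by linarith) (by linarith)
  have hp : (0:ℝ) < (1+t)^t := Real.rpow_pos_of_pos h1t t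
  gcongr
end

section
/- There exists an absolute constant C > 0 such that the following holds. For every m ≥ 3, set ℓ = C · (log m)/(log log m). Let X_1, …, X_n be mutually independent random variables taking values in the interval [0, 1] with Σ_{j=1}^n E[X_j] ≤ 1, and let S = Σ_{j=1}^n X_j. Then for every t ≥ 0, P(S > 1 + ℓ + t) ≤ e^{-t} / m. -/
open MeasureTheory ProbabilityTheory Real

/-- There exists an absolute constant `C > 0` such that: for every `m ≥ 3`, setting
`ℓ = C · (log m)/(log log m)`, if `X 1, …, X n` are mutually independent random
variables with values in `[0, 1]` and `∑ j, E[X j] ≤ 1`, and `S = ∑ j, X j`, then for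
every `t ≥ 0`, `P(S > 1 + ℓ + t) ≤ e^{-t} / m`. -/
theorem stmt4 :
    ∃ C : ℝ, 0 < C ∧
      ∀ (m : ℕ), 3 ≤ m →
        ∀ (Ω : Type) [MeasureSpace Ω] [IsProbabilityMeasure (ℙ : Measure Ω)]
          (n : ℕ) (X : Fin n → Ω → ℝ),
          (∀ j, Measurable (X j)) →
          iIndepFun X ℙ →
          (∀ j ω, X j ω ∈ Set.Icc (0 : ℝ) 1) →
          (∑ j, ∫ ω, X j ω) ≤ 1 →
          ∀ (t : ℝ), 0 ≤ t →
            ℙ {ω | 1 + C * Real.log m / Real.log (Real.log m) + t < ∑ j, X j ω} ≤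
              ENNReal.ofReal (Real.exp (-t) / m) := by
  refine ⟨3, by norm_num, ?_⟩
  intro m hm Ω _ _ n X hmeas hindep hmem hsum t ht
  have hm3 : (3 : ℝ) ≤ (m : ℝ) := by exact_mod_cast hm
  have hmpos : (0 : ℝ) < m := by linarith
  set L : ℝ := Real.log m with hLdef
  set LL : ℝ := Real.log L with hLLdef
  have he3 : Real.exp 1 < 3 := by
    have := Real.exp_one_lt_d9
    linarith
  have hL1 : 1 < L := by
    rw [hLdef, Real.lt_log_iff_exp_lt hmpos]
    linarith
  have hLpos : 0 < L := by linarith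
  have hLLpos : 0 < LL := Real.log_pos hL1
  set lam : ℝ := max 1 LL with hlamdef
  have hlam1 : 1 ≤ lam := le_max_left _ _
  have hlam0 : 0 ≤ lam := by linarith
  set a : ℝ := 1 + 3 * L / LL + t with hadef
  -- the key real-number inequality
  have hkey : Real.exp (-lam * a) * Real.exp (Real.exp lam - 1) ≤ Real.exp (-t) / m := by
    have hmexp : (m : ℝ) = Real.exp L := (Real.exp_log hmpos).symm
    rw [hmexp, ← Real.exp_add, div_eq_mul_inv, ← Real.exp_neg, ← Real.exp_add]
    apply Real.exp_le_exp.2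
    rcases le_total LL 1 with hLL1 | hLL1
    · have hlameq : lam = 1 := by
        rw [hlamdef, max_eq_left hLL1]
      have hdiv : 3 * L ≤ 3 * L / LL := by
        rw [le_div_iff₀ hLLpos]
        nlinarith
      have hee : Real.exp lam < 3 := by rw [hlameq]; exact he3
      rw [hlameq, hadef]
      nlinarith
    · have hlameq : lam = LL := by
        rw [hlamdef, max_eq_right hLL1]
      have hee : Real.exp lam = L := by
        rw [hlameq, hLLdef, Real.exp_log hLpos]
      have hmul : lam * (3 * L / LL) = 3 * L := by
        rw [hlameq]; field_simp
      have htll : t ≤ LL * t := le_mul_of_one_le_left ht hLL1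
      rw [hadef]
      have : lam * (1 + 3 * L / LL + t) = lam * 1 + 3 * L + lam * t := by
        rw [mul_add, mul_add, hmul]
      rw [hee]
      nlinarith [hlameq ▸ htll]
    -- end key
  -- integrability facts
  have hXint : ∀ j, Integrable (X j) ℙ := by
    intro j
    refine (integrable_const (1 : ℝ)).mono' (hmeas j).aestronglyMeasurable ?_
    filter_upwards with ω
    rw [Real.norm_eq_abs, abs_le]
    exact ⟨by linarith [(hmem j ω).1], (hmem j ω).2⟩
  have hexpint : ∀ j, Integrable (fun ω => Real.exp (lam * X j ω)) ℙ := by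
    intro j
    refine (integrable_const (Real.exp lam)).mono'
      ((hmeas j).const_mul lam).exp.aestronglyMeasurable ?_
    filter_upwards with ω
    rw [Real.norm_eq_abs, abs_of_pos (Real.exp_pos _)]
    exact Real.exp_le_exp.2 (by nlinarith [(hmem j ω).1, (hmem j ω).2])
  -- mgf bound for each j
  have hc0 : 0 ≤ Real.exp lam - 1 := by
    have := Real.one_le_exp hlam0
    linarith
  have hmgf : ∀ j, mgf (X j) ℙ lam ≤ Real.exp ((Real.exp lam - 1) * ∫ ω, X j ω) := by
    intro j
    have hptw : ∀ ω, Real.exp (lam * X j ω) ≤ 1 + (Real.exp lam - 1) * X j ω := by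
      intro ω
      obtain ⟨hx0, hx1⟩ := hmem j ω
      have := convexOn_exp.2 (Set.mem_univ (0 : ℝ)) (Set.mem_univ lam)
        (by linarith : (0:ℝ) ≤ 1 - X j ω) hx0 (by ring)
      simp only [smul_eq_mul, mul_zero, zero_add, Real.exp_zero, mul_one] at this
      calc Real.exp (lam * X j ω) = Real.exp (X j ω * lam) := by ring_nf
        _ ≤ (1 - X j ω) * 1 + X j ω * Real.exp lam := by
            simpa using this
        _ = 1 + (Real.exp lam - 1) * X j ω := by ring
    have h1 : mgf (X j) ℙ lam ≤ ∫ ω, (1 + (Real.exp lam - 1) * X j ω) := by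
      refine integral_mono (hexpint j) ?_ hptw
      exact (integrable_const 1).add ((hXint j).const_mul _)
    have h2 : (∫ ω, (1 + (Real.exp lam - 1) * X j ω)) =
        1 + (Real.exp lam - 1) * ∫ ω, X j ω := by
      rw [integral_add (integrable_const 1) ((hXint j).const_mul _),
        integral_const_mul]
      simp [integral_const]
    calc mgf (X j) ℙ lam ≤ 1 + (Real.exp lam - 1) * ∫ ω, X j ω := by rw [← h2]; exact h1
      _ ≤ Real.exp ((Real.exp lam - 1) * ∫ ω, X j ω) := by
          have := Real.add_one_le_exp ((Real.exp lam - 1) * ∫ ω, X j ω)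
          linarith
  -- product bound
  have hprod : mgf (∑ j, X j) ℙ lam ≤ Real.exp (Real.exp lam - 1) := by
    rw [hindep.mgf_sum hmeas]
    calc (∏ j, mgf (X j) ℙ lam)
        ≤ ∏ j, Real.exp ((Real.exp lam - 1) * ∫ ω, X j ω) :=
          Finset.prod_le_prod (fun j _ => mgf_nonneg) (fun j _ => hmgf j)
      _ = Real.exp (∑ j, (Real.exp lam - 1) * ∫ ω, X j ω) := by
          rw [Real.exp_sum]
      _ ≤ Real.exp (Real.exp lam - 1) := by
          apply Real.exp_le_exp.2
          rw [← Finset.mul_sum]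
          nlinarith
  -- Chernoff
  have hSint : Integrable (fun ω => Real.exp (lam * (∑ j, X j) ω)) ℙ :=
    hindep.integrable_exp_mul_sum hmeas (fun j _ => hexpint j)
  have hcher := measure_ge_le_exp_mul_mgf (μ := ℙ) (X := ∑ j, X j) a hlam0 hSint
  have hmono : ℙ {ω | 1 + 3 * L / LL + t < ∑ j, X j ω} ≤ ℙ {ω | a ≤ (∑ j, X j) ω} := by
    apply measure_mono
    intro ω hω
    simp only [Set.mem_setOf_eq, Finset.sum_apply] at *
    exact le_of_lt hω
  refine hmono.trans ?_
  rw [ENNReal.le_ofReal_iff_toReal_le (measure_ne_top _ _)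
    (by positivity)]
  refine hcher.trans ?_
  calc Real.exp (-lam * a) * mgf (∑ j, X j) ℙ lam
      ≤ Real.exp (-lam * a) * Real.exp (Real.exp lam - 1) := by
        exact mul_le_mul_of_nonneg_left hprod (Real.exp_pos _).le
    _ ≤ Real.exp (-t) / m := hkey
end

section
/- Let c_1, …, c_m be natural numbers with c_m ≥ 1 and c_i ≥ (3/2) · c_{i+1} for all 1 ≤ i < m. Let S_1, …, S_m be random variables on a common probability space such that each S_i = Σ_{j=1}^{n_i} X_{ij} is a finite sum of mutually independent random variables X_{ij} taking values in the interval [0, 1], and E[S_i] ≤ c_i for every i. Then for every t ≥ 3, P(max_{1 ≤ i ≤ m} S_i / c_i ≥ 2 + t) ≤ 3 · e^{−t/3}. -/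
open MeasureTheory ProbabilityTheory Real

lemma aux_exp_le {x : ℝ} (h0 : 0 ≤ x) (h1 : x ≤ 1) :
    Real.exp x ≤ 1 + (Real.exp 1 - 1) * x := by
  have h := convexOn_exp.2 (Set.mem_univ (0:ℝ)) (Set.mem_univ (1:ℝ))
    (by linarith : (0:ℝ) ≤ 1 - x) h0 (by ring)
  simp only [smul_eq_mul, mul_zero, mul_one, Real.exp_zero] at h
  calc Real.exp x = Real.exp ((1-x)*0 + x*1) := by ring_nf
    _ ≤ (1-x) * 1 + x * Real.exp 1 := by simpa using h
    _ = 1 + (Real.exp 1 - 1) * x := by ring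

lemma aux_int_exp {Ω : Type} [MeasureSpace Ω] [IsProbabilityMeasure (ℙ : Measure Ω)]
    {X : Ω → ℝ} (hX : Measurable X) (hb : ∀ ω, X ω ∈ Set.Icc (0:ℝ) 1) :
    Integrable (fun ω => Real.exp (1 * X ω)) ℙ := by
  refine Integrable.mono' (integrable_const (Real.exp 1)) ((hX.const_mul 1).exp.aestronglyMeasurable) ?_
  filter_upwards with ω
  rw [Real.norm_eq_abs, Real.abs_exp]
  exact Real.exp_le_exp.2 (by simpa using (hb ω).2)

lemma aux_int {Ω : Type} [MeasureSpace Ω] [IsProbabilityMeasure (ℙ : Measure Ω)]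
    {X : Ω → ℝ} (hX : Measurable X) (hb : ∀ ω, X ω ∈ Set.Icc (0:ℝ) 1) :
    Integrable X ℙ := by
  refine Integrable.mono' (integrable_const 1) hX.aestronglyMeasurable ?_
  filter_upwards with ω
  rw [Real.norm_eq_abs, abs_of_nonneg (hb ω).1]; exact (hb ω).2

lemma aux_mgf_le {Ω : Type} [MeasureSpace Ω] [IsProbabilityMeasure (ℙ : Measure Ω)]
    {X : Ω → ℝ} (hX : Measurable X) (hb : ∀ ω, X ω ∈ Set.Icc (0:ℝ) 1) :
    mgf X ℙ 1 ≤ Real.exp ((Real.exp 1 - 1) * ∫ ω, X ω) := by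
  have h1 : mgf X ℙ 1 ≤ ∫ ω, (1 + (Real.exp 1 - 1) * X ω) := by
    rw [mgf]
    refine integral_mono (by simpa using aux_int_exp hX hb) ?_ ?_
    · exact (integrable_const 1).add ((aux_int hX hb).const_mul _)
    · intro ω; simpa using aux_exp_le (hb ω).1 (hb ω).2
  have h2 : (∫ ω, (1 + (Real.exp 1 - 1) * X ω)) = 1 + (Real.exp 1 - 1) * ∫ ω, X ω := by
    rw [integral_add (integrable_const 1) ((aux_int hX hb).const_mul _)]
    simp [integral_const_mul]
  calc mgf X ℙ 1 ≤ 1 + (Real.exp 1 - 1) * ∫ ω, X ω := h1.trans h2.le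
    _ ≤ Real.exp ((Real.exp 1 - 1) * ∫ ω, X ω) := by
        have := Real.add_one_le_exp ((Real.exp 1 - 1) * ∫ ω, X ω)
        linarith

lemma aux_chernoff {Ω : Type} [MeasureSpace Ω] [IsProbabilityMeasure (ℙ : Measure Ω)]
    {n : ℕ} {X : Fin n → Ω → ℝ} (hmeas : ∀ j, Measurable (X j))
    (hindep : iIndepFun X ℙ)
    (hb : ∀ j ω, X j ω ∈ Set.Icc (0:ℝ) 1) (a : ℝ) :
    (ℙ {ω | a ≤ ∑ j, X j ω}).toReal ≤
      Real.exp (-a) * Real.exp ((Real.exp 1 - 1) * ∫ ω, ∑ j, X j ω) := by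
  have hsum : (∑ j, X j) = fun ω => ∑ j, X j ω := by
    ext ω; simp [Finset.sum_apply]
  have hint : Integrable (fun ω => Real.exp (1 * (∑ j, X j) ω)) ℙ := by
    refine hindep.integrable_exp_mul_sum hmeas (fun j _ => ?_)
    exact aux_int_exp (hmeas j) (hb j)
  have h := measure_ge_le_exp_mul_mgf (μ := ℙ) (X := ∑ j, X j) a zero_le_one hint
  rw [hsum] at h
  refine h.trans ?_
  rw [neg_one_mul]
  refine mul_le_mul_of_nonneg_left ?_ (Real.exp_nonneg _)
  have hmg : mgf (fun ω => ∑ j, X j ω) ℙ 1 = ∏ j, mgf (X j) ℙ 1 := by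
    rw [← hsum, hindep.mgf_sum hmeas Finset.univ]
  rw [hmg]
  calc (∏ j, mgf (X j) ℙ 1) ≤ ∏ j, Real.exp ((Real.exp 1 - 1) * ∫ ω, X j ω) := by
        refine Finset.prod_le_prod (fun j _ => mgf_nonneg) (fun j _ => ?_)
        exact aux_mgf_le (hmeas j) (hb j)
    _ = Real.exp (∑ j, (Real.exp 1 - 1) * ∫ ω, X j ω) := by rw [Real.exp_sum]
    _ = Real.exp ((Real.exp 1 - 1) * ∫ ω, ∑ j, X j ω) := by
        rw [integral_finset_sum _ (fun j _ => aux_int (hmeas j) (hb j)), Finset.mul_sum]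

lemma aux_arith (t : ℝ) (ht : 3 ≤ t) (k : ℕ) (C : ℝ) (hC : ((3:ℝ)/2)^k ≤ C) :
    t/3 + k ≤ (t + 3 - Real.exp 1) * C := by
  have he : Real.exp 1 < 2.7182818286 := Real.exp_one_lt_d9
  have hb : 1 + (k:ℝ) * (1/2) ≤ (1 + 1/2)^k := one_add_mul_le_pow (by norm_num) k
  have hb' : (1:ℝ) + k/2 ≤ (3/2)^k := by norm_num at hb ⊢; linarith
  have hα : (3:ℝ) ≤ t + 3 - Real.exp 1 := by linarith
  nlinarith [mul_le_mul_of_nonneg_left hC (by linarith : (0:ℝ) ≤ t + 3 - Real.exp 1),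
    mul_le_mul_of_nonneg_left hb' (by linarith : (0:ℝ) ≤ t + 3 - Real.exp 1),
    Nat.cast_nonneg (α := ℝ) k, sq_nonneg ((k:ℝ))]

/-- Let `c 1, …, c m` be natural numbers with `c m ≥ 1` and `c i ≥ (3/2) · c (i+1)`,
and let `S i = ∑ j, X i j` be finite sums of mutually independent random variables
with values in `[0, 1]` satisfying `E[S i] ≤ c i`. Then for every `t ≥ 3`,
`P(max_i S i / c i ≥ 2 + t) ≤ 3 · e^{−t/3}`. -/
theorem stmt6 {Ω : Type} [MeasureSpace Ω] [IsProbabilityMeasure (ℙ : Measure Ω)]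
    (m : ℕ) (hm : 0 < m) (c : Fin m → ℕ)
    (hlast : 1 ≤ c ⟨m - 1, by omega⟩)
    (hgeo : ∀ (i : Fin m) (h : i.val + 1 < m), (3 : ℝ) / 2 * c ⟨i.val + 1, h⟩ ≤ c i)
    (n : Fin m → ℕ) (X : (i : Fin m) → Fin (n i) → Ω → ℝ)
    (hmeas : ∀ i j, Measurable (X i j))
    (hindep : ∀ i, iIndepFun (X i) ℙ)
    (hbound : ∀ i j ω, X i j ω ∈ Set.Icc (0 : ℝ) 1)
    (hexp : ∀ i, (∫ ω, ∑ j, X i j ω) ≤ c i)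
    (t : ℝ) (ht : 3 ≤ t) :
    ℙ {ω | 2 + t ≤ ⨆ i, (∑ j, X i j ω) / c i} ≤
      ENNReal.ofReal (3 * Real.exp (-t / 3)) := by
  have hm' : Nonempty (Fin m) := ⟨⟨0, hm⟩⟩
  -- lower bound on c i
  have hc : ∀ i : Fin m, ((3:ℝ)/2)^(m - 1 - i.val) ≤ c i := by
    have key : ∀ d, d < m → ((3:ℝ)/2)^d ≤ c ⟨m - 1 - d, by omega⟩ := by
      intro d
      induction d with
      | zero =>
        intro hd
        simpa using (by exact_mod_cast hlast : (1:ℝ) ≤ c ⟨m-1, by omega⟩)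
      | succ d ih =>
        intro hd
        have h1 : (m - 1 - (d+1)) + 1 < m := by omega
        have h2 := hgeo ⟨m - 1 - (d+1), by omega⟩ h1
        have h3 : (⟨(m - 1 - (d+1)) + 1, h1⟩ : Fin m) = ⟨m - 1 - d, by omega⟩ := by
          apply Fin.ext; simp; omega
        rw [h3] at h2
        have h4 := ih (by omega)
        calc ((3:ℝ)/2)^(d+1) = (3/2) * (3/2)^d := by ring
          _ ≤ (3/2) * c (⟨m - 1 - d, by omega⟩ : Fin m) := by linarith [h4]
          _ ≤ c ⟨m - 1 - (d+1), by omega⟩ := h2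
    intro i
    have h0 := key (m - 1 - i.val) (by omega)
    have h5 : (⟨m - 1 - (m - 1 - i.val), by omega⟩ : Fin m) = i := by
      apply Fin.ext; simp; omega
    rwa [h5] at h0
  have hcpos : ∀ i : Fin m, (0:ℝ) < c i :=
    fun i => lt_of_lt_of_le (by positivity) (hc i)
  -- event inclusion
  have hsub : {ω | 2 + t ≤ ⨆ i, (∑ j, X i j ω) / c i} ⊆
      ⋃ i, {ω | (2+t) * c i ≤ ∑ j, X i j ω} := by
    intro ω hω
    obtain ⟨i, hi⟩ := exists_eq_ciSup_of_finite (f := fun i => (∑ j, X i j ω) / (c i : ℝ))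
    refine Set.mem_iUnion.2 ⟨i, ?_⟩
    have hle : 2 + t ≤ (∑ j, X i j ω) / c i := by rw [hi]; exact hω
    exact (le_div_iff₀ (hcpos i)).1 hle
  -- per-term bound
  have hterm : ∀ i : Fin m, (ℙ {ω | (2+t) * c i ≤ ∑ j, X i j ω}).toReal ≤
      Real.exp (-(t/3)) * (1/2)^(m - 1 - i.val) := by
    intro i
    have h1 := aux_chernoff (hmeas i) (hindep i) (hbound i) ((2+t) * c i)
    have he1 : (1:ℝ) ≤ Real.exp 1 - 1 + 1 := by
      have := Real.add_one_le_exp (1:ℝ); linarith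
    have h2 : Real.exp ((Real.exp 1 - 1) * ∫ ω, ∑ j, X i j ω)
        ≤ Real.exp ((Real.exp 1 - 1) * c i) := by
      apply Real.exp_le_exp.2
      refine mul_le_mul_of_nonneg_left (hexp i) (by linarith)
    have h3 : Real.exp (-((2+t) * c i)) * Real.exp ((Real.exp 1 - 1) * c i)
        = Real.exp (-((t + 3 - Real.exp 1) * c i)) := by
      rw [← Real.exp_add]; ring_nf
    have h4 : Real.exp (-((t + 3 - Real.exp 1) * c i))
        ≤ Real.exp (-(t/3 + (m - 1 - i.val : ℕ))) := by
      apply Real.exp_le_exp.2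
      have := aux_arith t ht (m - 1 - i.val) (c i) (hc i)
      linarith
    have h5 : Real.exp (-(t/3 + (m - 1 - i.val : ℕ)))
        ≤ Real.exp (-(t/3)) * (1/2)^(m - 1 - i.val) := by
      rw [neg_add, Real.exp_add]
      refine mul_le_mul_of_nonneg_left ?_ (Real.exp_nonneg _)
      have : Real.exp (-((m - 1 - i.val : ℕ) : ℝ)) = (Real.exp (-1))^(m - 1 - i.val) := by
        rw [← Real.exp_nat_mul]; ring_nf
      rw [this]
      refine pow_le_pow_left₀ (Real.exp_nonneg _) ?_ _
      rw [Real.exp_neg]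
      have h2e : (2:ℝ) ≤ Real.exp 1 := by
        have := Real.exp_one_gt_d9; norm_num at this ⊢; linarith
      rw [inv_le_comm₀ (by linarith) (by norm_num)]
      norm_num; linarith
    calc (ℙ {ω | (2+t) * c i ≤ ∑ j, X i j ω}).toReal
        ≤ Real.exp (-((2+t) * c i)) * Real.exp ((Real.exp 1 - 1) * ∫ ω, ∑ j, X i j ω) := h1
      _ ≤ Real.exp (-((2+t) * c i)) * Real.exp ((Real.exp 1 - 1) * c i) :=
          mul_le_mul_of_nonneg_left h2 (Real.exp_nonneg _)
      _ = Real.exp (-((t + 3 - Real.exp 1) * c i)) := h3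
      _ ≤ Real.exp (-(t/3 + (m - 1 - i.val : ℕ))) := h4
      _ ≤ Real.exp (-(t/3)) * (1/2)^(m - 1 - i.val) := h5
  -- assemble
  calc ℙ {ω | 2 + t ≤ ⨆ i, (∑ j, X i j ω) / c i}
      ≤ ℙ (⋃ i, {ω | (2+t) * c i ≤ ∑ j, X i j ω}) := measure_mono hsub
    _ ≤ ∑' i, ℙ {ω | (2+t) * c i ≤ ∑ j, X i j ω} := measure_iUnion_le _
    _ = ∑ i, ℙ {ω | (2+t) * c i ≤ ∑ j, X i j ω} := tsum_fintype _
    _ ≤ ∑ i : Fin m, ENNReal.ofReal (Real.exp (-(t/3)) * (1/2)^(m - 1 - i.val)) := by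
        refine Finset.sum_le_sum (fun i _ => ?_)
        rw [← ENNReal.ofReal_toReal (measure_ne_top ℙ _)]
        exact ENNReal.ofReal_le_ofReal (hterm i)
    _ = ENNReal.ofReal (∑ i : Fin m, Real.exp (-(t/3)) * (1/2)^(m - 1 - i.val)) := by
        rw [ENNReal.ofReal_sum_of_nonneg (fun i _ => by positivity)]
    _ ≤ ENNReal.ofReal (3 * Real.exp (-t / 3)) := by
        apply ENNReal.ofReal_le_ofReal
        rw [← Finset.mul_sum]
        have hs : (∑ i : Fin m, ((1:ℝ)/2)^(m - 1 - i.val)) ≤ 2 := by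
          rw [Fin.sum_univ_eq_sum_range (fun j => ((1:ℝ)/2)^(m - 1 - j)) m,
            Finset.sum_range_reflect (fun j => ((1:ℝ)/2)^j) m]
          exact sum_geometric_two_le m
        have hepos : (0:ℝ) < Real.exp (-(t/3)) := Real.exp_pos _
        have : Real.exp (-(t/3)) = Real.exp (-t/3) := by ring_nf
        nlinarith [Real.exp_pos (-t/3)]
end

section
/- Consider M machines indexed 1, …, M with speeds s_i > 0 and n jobs indexed 1, …, n with sizes p_j ≥ 0, at least one job. For an assignment σ : {1,…,n} → {1,…,M} and a machine i, define the load of i just before job j as L_i(j) = (Σ_{j' < j, σ(j') = i} p_{j'}) / s_i, and the final load of i as L_i = (Σ_{j : σ(j) = i} p_j) / s_i. Suppose σ is greedy (list scheduling): for every job j and every machine i, L_{σ(j)}(j) ≤ L_i(j). Then the makespan satisfies max_{1 ≤ i ≤ M} L_i ≤ (Σ_{j=1}^n p_j) / (Σ_{i=1}^M s_i) + (max_{1 ≤ j ≤ n} p_j) / (min_{1 ≤ i ≤ M} s_i). -/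
open Finset

/-- List-scheduling (greedy) bound on related machines: if `σ` assigns each job to a
machine whose current load is minimal, then the makespan is at most the total job size
divided by the total speed, plus the maximum job size divided by the minimum speed. -/
theorem stmt8 (M n : ℕ) (hM : 0 < M) (hn : 0 < n)
    (s : Fin M → ℝ) (hs : ∀ i, 0 < s i)
    (p : Fin n → ℝ) (hp : ∀ j, 0 ≤ p j)
    (σ : Fin n → Fin M)
    (hgreedy : ∀ (j : Fin n) (i : Fin M),
      (∑ j' ∈ Finset.univ.filter (fun j' => j' < j ∧ σ j' = σ j), p j') / s (σ j) ≤
        (∑ j' ∈ Finset.univ.filter (fun j' => j' < j ∧ σ j' = i), p j') / s i) :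
    (⨆ i, (∑ j ∈ Finset.univ.filter (fun j => σ j = i), p j) / s i) ≤
      (∑ j, p j) / (∑ i, s i) + (⨆ j, p j) / (⨅ i, s i) := by
  haveI : Nonempty (Fin M) := ⟨⟨0, hM⟩⟩
  haveI : Nonempty (Fin n) := ⟨⟨0, hn⟩⟩
  have hS : 0 < ∑ i, s i := Finset.sum_pos (fun i _ => hs i) univ_nonempty
  have hP : 0 ≤ ∑ j, p j := Finset.sum_nonneg fun j _ => hp j
  obtain ⟨i0, hi0⟩ := exists_eq_ciInf_of_finite (f := s)
  have hinf : 0 < ⨅ i, s i := hi0 ▸ hs i0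
  have hbddp : BddAbove (Set.range p) := (Set.finite_range p).bddAbove
  have hbdds : BddBelow (Set.range s) := (Set.finite_range s).bddBelow
  have hsupP : 0 ≤ ⨆ j, p j :=
    le_trans (hp (Classical.arbitrary _)) (le_ciSup hbddp _)
  apply ciSup_le
  intro i
  by_cases hT : (univ.filter (fun j => σ j = i)).Nonempty
  · set T := univ.filter (fun j => σ j = i) with hTdef
    set j := T.max' hT with hj
    have hjT : j ∈ T := T.max'_mem hT
    have hσj : σ j = i := by simpa [hTdef] using hjT
    set A := ∑ j' ∈ univ.filter (fun j' => j' < j ∧ σ j' = i), p j' with hA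
    have hsplit : ∑ j' ∈ T, p j' = A + p j := by
      have hTeq : T = insert j (univ.filter (fun j' => j' < j ∧ σ j' = i)) := by
        ext x
        simp only [hTdef, mem_filter, mem_univ, true_and, mem_insert]
        constructor
        · intro hx
          rcases lt_or_eq_of_le (T.le_max' x (by simp [hTdef, hx])) with h | h
          · exact Or.inr ⟨h, hx⟩
          · exact Or.inl h
        · rintro (rfl | ⟨_, hx⟩)
          · exact hσj
          · exact hx
      rw [hTeq, Finset.sum_insert (by simp)]
      ring
    have h1 : A / s i ≤ (∑ j, p j) / (∑ i, s i) := by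
      rw [le_div_iff₀ hS]
      have hk : ∀ k, s k * (A / s i) ≤ ∑ j' ∈ univ.filter (fun j' => j' < j ∧ σ j' = k), p j' := by
        intro k
        have := hgreedy j k
        rw [hσj] at this
        rw [mul_comm, ← le_div_iff₀ (hs k)]
        exact le_trans this (le_refl _)
      calc A / s i * ∑ k, s k = ∑ k, s k * (A / s i) := by
            rw [← Finset.sum_mul]; ring
        _ ≤ ∑ k, ∑ j' ∈ univ.filter (fun j' => j' < j ∧ σ j' = k), p j' :=
            Finset.sum_le_sum fun k _ => hk k
        _ = ∑ j' ∈ univ.filter (fun j' => j' < j), p j' := by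
            rw [← Finset.sum_fiberwise (univ.filter (fun j' => j' < j)) σ p]
            congr 1
            ext k
            rw [Finset.filter_filter]
        _ ≤ ∑ j, p j :=
            Finset.sum_le_sum_of_subset_of_nonneg (filter_subset _ _)
              (fun x _ _ => hp x)
    have h2 : p j / s i ≤ (⨆ j, p j) / (⨅ i, s i) :=
      div_le_div₀ hsupP (le_ciSup hbddp j) hinf (ciInf_le hbdds i)
    calc (∑ j' ∈ T, p j') / s i = A / s i + p j / s i := by
          rw [hsplit, add_div]
      _ ≤ _ := add_le_add h1 h2
  · rw [Finset.not_nonempty_iff_eq_empty] at hT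
    rw [hT, Finset.sum_empty, zero_div]
    exact add_nonneg (div_nonneg hP hS.le) (div_nonneg hsupP hinf.le)
end

section
/- Let m ≥ 1 and consider m machines with speeds s_i satisfying 0 < s_i ≤ 1 for all i and max_i s_i = 1, and n jobs with sizes p_j ≥ 0. Let F = { i : s_i ≥ 1/√m } be the set of fast machines. Suppose there exists an assignment of all jobs to the m machines whose makespan (maximum over machines i of (Σ_{jobs j assigned to i} p_j)/s_i) is at most T. Then every greedy (list scheduling) assignment of the jobs, in any order, to machines in F only — i.e., an assignment σ : {1,…,n} → F such that for every job j and every i ∈ F, the load of σ(j) just before j is at most the load of i just before j — has makespan at most 3 · √m · T. -/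
/-!
Let `R = √m` and `F` the machines of speed at least `1/R`. The slow machines have total speed
at most `m · (1/R) = R`, while `F` contains a machine of speed `1`, so the total speed is at
most `2R` times the total speed of `F`; comparing with the assignment of makespan `T`, the total
work is at most `2RT · ∑_{i∈F} s_i`. When job `j` is placed, greedy chose the least loaded
machine of `F`, so its load is at most the speed-weighted average of the loads on `F`, hence at
most `2RT`. Job `j` itself has size at most `T` and adds at most `RT` to a machine of speed
`≥ 1/R`.
-/

open Finset

section Speeds

variable {κ : Type*} [Fintype κ]

theorem sum_le_sum_filter_add_card_mul (s : κ → ℝ) {c : ℝ} (hc : 0 ≤ c) :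
    ∑ i, s i ≤ ∑ i ∈ univ.filter (fun i => c ≤ s i), s i + Fintype.card κ * c := by
  rw [← sum_filter_add_sum_filter_not univ (fun i => c ≤ s i)]
  gcongr
  calc ∑ i ∈ univ.filter (fun i => ¬c ≤ s i), s i
      ≤ ∑ _i ∈ univ.filter (fun i => ¬c ≤ s i), c :=
        sum_le_sum fun i hi => (not_le.mp (mem_filter.mp hi).2).le
    _ ≤ Fintype.card κ * c := by
        rw [sum_const, nsmul_eq_mul]
        gcongr
        exact_mod_cast card_filter_le _ _

theorem sum_le_two_sqrt_card_mul_sum_fast (s : κ → ℝ)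
    (hF : 1 ≤ ∑ i ∈ univ.filter (fun i => 1 / √(Fintype.card κ) ≤ s i), s i) :
    ∑ i, s i ≤
      2 * √(Fintype.card κ) * ∑ i ∈ univ.filter (fun i => 1 / √(Fintype.card κ) ≤ s i), s i := by
  set R := √(Fintype.card κ)
  obtain ⟨i, -, -⟩ := exists_ne_zero_of_sum_ne_zero (one_pos.trans_le hF).ne'
  have hR : 1 ≤ R := Real.one_le_sqrt.mpr (by exact_mod_cast Fintype.card_pos_iff.mpr ⟨i⟩)
  have hcard : (Fintype.card κ : ℝ) * (1 / R) = R := by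
    have hRR : R * R = Fintype.card κ := Real.mul_self_sqrt (Nat.cast_nonneg _)
    field_simp
    linarith
  have := sum_le_sum_filter_add_card_mul s (c := 1 / R) (by positivity)
  rw [hcard] at this
  nlinarith

end Speeds

section ListScheduling

variable {ι κ : Type*} [Fintype ι] [DecidableEq κ]

noncomputable def load (s : κ → ℝ) (p : ι → ℝ) (σ : ι → κ) (i : κ) : ℝ :=
  (∑ j ∈ univ.filter (fun j => σ j = i), p j) / s i

noncomputable def loadBefore [LinearOrder ι] (s : κ → ℝ) (p : ι → ℝ) (σ : ι → κ) (j : ι) (i : κ) :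
    ℝ :=
  (∑ j' ∈ univ.filter (fun j' => j' < j ∧ σ j' = i), p j') / s i

variable {s : κ → ℝ} {p : ι → ℝ}

theorem sum_le_mul_sum_of_load_le [Fintype κ] (hs : ∀ i, 0 < s i) {ρ : ι → κ} {T : ℝ}
    (hρ : ∀ i, load s p ρ i ≤ T) : ∑ j, p j ≤ T * ∑ i, s i := by
  rw [← sum_fiberwise_of_maps_to (fun j _ => mem_univ (ρ j)) p, mul_sum]
  exact sum_le_sum fun i _ => mul_comm T (s i) ▸ (div_le_iff₀ (hs i)).mp (hρ i)

theorem le_mul_of_load_le (hp : ∀ j, 0 ≤ p j) (hs : ∀ i, 0 < s i) {ρ : ι → κ} {T : ℝ}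
    (hρ : ∀ i, load s p ρ i ≤ T) (j : ι) : p j ≤ T * s (ρ j) :=
  calc p j ≤ ∑ j' ∈ univ.filter (fun j' => ρ j' = ρ j), p j' :=
        single_le_sum (fun j' _ => hp j') (mem_filter.mpr ⟨mem_univ j, rfl⟩)
    _ ≤ T * s (ρ j) := (div_le_iff₀ (hs (ρ j))).mp (hρ (ρ j))

variable [LinearOrder ι] {σ : ι → κ}

theorem loadBefore_mul_sum_le (hs : ∀ i, 0 < s i) {F : Finset κ} (hσF : ∀ j, σ j ∈ F) {j : ι}
    (hgreedy : ∀ i ∈ F, loadBefore s p σ j (σ j) ≤ loadBefore s p σ j i) :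
    loadBefore s p σ j (σ j) * ∑ i ∈ F, s i ≤ ∑ j' ∈ univ.filter (· < j), p j' := by
  rw [← sum_fiberwise_of_maps_to (fun j' _ => hσF j'), mul_sum]
  refine sum_le_sum fun i hi => ?_
  calc loadBefore s p σ j (σ j) * s i ≤ loadBefore s p σ j i * s i :=
        mul_le_mul_of_nonneg_right (hgreedy i hi) (hs i).le
    _ = ∑ j' ∈ univ.filter (fun j' => j' < j ∧ σ j' = i), p j' :=
        div_mul_cancel₀ _ (hs i).ne'
    _ = ∑ j' ∈ (univ.filter (· < j)).filter (fun j' => σ j' = i), p j' := by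
        rw [filter_filter]

theorem loadBefore_le_of_sum_le (hp : ∀ j, 0 ≤ p j) (hs : ∀ i, 0 < s i) {F : Finset κ}
    (hσF : ∀ j, σ j ∈ F) (hF : 0 < ∑ i ∈ F, s i) {W : ℝ} (hW : ∑ j, p j ≤ W * ∑ i ∈ F, s i)
    {j : ι} (hgreedy : ∀ i ∈ F, loadBefore s p σ j (σ j) ≤ loadBefore s p σ j i) :
    loadBefore s p σ j (σ j) ≤ W :=
  le_of_mul_le_mul_right ((loadBefore_mul_sum_le hs hσF hgreedy).trans
    ((sum_le_sum_of_subset_of_nonneg (filter_subset _ _) fun j' _ _ => hp j').trans hW)) hF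

/-- The final load of a machine is the load just after its last job. -/
theorem load_le_of_forall_loadBefore_add_le {B : ℝ} (hB : 0 ≤ B)
    (h : ∀ j, loadBefore s p σ j (σ j) + p j / s (σ j) ≤ B) (i : κ) : load s p σ i ≤ B := by
  set A := univ.filter (fun j => σ j = i)
  rcases A.eq_empty_or_nonempty with hA | hA
  · simpa [load, A, hA] using hB
  set j := A.max' hA
  have hj : σ j = i := (mem_filter.mp (A.max'_mem hA)).2
  have herase : A.erase j = univ.filter (fun j' => j' < j ∧ σ j' = i) := by
    ext j'
    simp only [A, mem_erase, mem_filter, mem_univ, true_and]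
    exact ⟨fun ⟨hne, hj'⟩ =>
        ⟨lt_of_le_of_ne (A.le_max' j' (by simpa [A] using hj')) hne, hj'⟩,
      fun ⟨hlt, hj'⟩ => ⟨hlt.ne, hj'⟩⟩
  rw [load, ← add_sum_erase A p (A.max'_mem hA), herase, add_div, add_comm]
  exact hj ▸ h j

end ListScheduling

theorem stmt9_general (m n : ℕ)
    (s : Fin m → ℝ) (hpos : ∀ i, 0 < s i) (hle : ∀ i, s i ≤ 1) (hmax : ∃ i, s i = 1)
    (p : Fin n → ℝ) (hp : ∀ j, 0 ≤ p j)
    (T : ℝ)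
    (ρ : Fin n → Fin m)
    (hρ : ∀ i, (∑ j ∈ Finset.univ.filter (fun j => ρ j = i), p j) / s i ≤ T)
    (σ : Fin n → Fin m)
    (hσF : ∀ j, 1 / Real.sqrt m ≤ s (σ j))
    (hgreedy : ∀ (j : Fin n) (i : Fin m), 1 / Real.sqrt m ≤ s i →
      (∑ j' ∈ Finset.univ.filter (fun j' => j' < j ∧ σ j' = σ j), p j') / s (σ j) ≤
        (∑ j' ∈ Finset.univ.filter (fun j' => j' < j ∧ σ j' = i), p j') / s i) :
    (⨆ i, (∑ j ∈ Finset.univ.filter (fun j => σ j = i), p j) / s i) ≤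
      3 * Real.sqrt m * T := by
  obtain ⟨i₁, hi₁⟩ := hmax
  have hT : 0 ≤ T := (div_nonneg (sum_nonneg fun j _ => hp j) (hpos i₁).le).trans (hρ i₁)
  set R := √(m : ℝ)
  have hR : 1 ≤ R := Real.one_le_sqrt.mpr (by exact_mod_cast i₁.pos)
  set F := univ.filter (fun i => 1 / R ≤ s i)
  have hSF : 1 ≤ ∑ i ∈ F, s i := by
    have hi₁F : i₁ ∈ F :=
      mem_filter.mpr ⟨mem_univ i₁, hi₁ ▸ div_le_one_of_le₀ hR (by positivity)⟩
    exact hi₁ ▸ single_le_sum (fun i _ => (hpos i).le) hi₁F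
  have hwork : ∑ j, p j ≤ 2 * R * T * ∑ i ∈ F, s i := by
    have hfast := sum_le_two_sqrt_card_mul_sum_fast s
    rw [Fintype.card_fin] at hfast
    calc ∑ j, p j ≤ T * ∑ i, s i := sum_le_mul_sum_of_load_le hpos hρ
      _ ≤ T * (2 * R * ∑ i ∈ F, s i) := by gcongr; exact hfast hSF
      _ = 2 * R * T * ∑ i ∈ F, s i := by ring
  have hbefore (j : Fin n) : loadBefore s p σ j (σ j) ≤ 2 * R * T :=
    loadBefore_le_of_sum_le hp hpos (fun j => mem_filter.mpr ⟨mem_univ _, hσF j⟩)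
      (one_pos.trans_le hSF) hwork fun i hi => hgreedy j i (mem_filter.mp hi).2
  have hlast (j : Fin n) : p j / s (σ j) ≤ R * T :=
    calc p j / s (σ j) ≤ p j / (1 / R) :=
          div_le_div_of_nonneg_left (hp j) (by positivity) (hσF j)
      _ = R * p j := by field_simp
      _ ≤ R * T := by
          gcongr
          exact (le_mul_of_load_le hp hpos hρ j).trans (mul_le_of_le_one_right hT (hle _))
  exact Real.iSup_le (load_le_of_forall_loadBefore_add_le (by positivity)
    fun j => by linarith [hbefore j, hlast j]) (by positivity)

/-- List scheduling restricted to the fast machines `F = {i : s i ≥ 1/√m}` on related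
machines: if some assignment of all jobs to the `m` machines has makespan at most `T`,
then every greedy assignment of the jobs to machines in `F` has makespan at most
`3 · √m · T`. -/
theorem stmt9 (m n : ℕ) (hm : 0 < m)
    (s : Fin m → ℝ) (hpos : ∀ i, 0 < s i) (hle : ∀ i, s i ≤ 1) (hmax : ∃ i, s i = 1)
    (p : Fin n → ℝ) (hp : ∀ j, 0 ≤ p j)
    (T : ℝ)
    (ρ : Fin n → Fin m)
    (hρ : ∀ i, (∑ j ∈ Finset.univ.filter (fun j => ρ j = i), p j) / s i ≤ T)
    (σ : Fin n → Fin m)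
    (hσF : ∀ j, 1 / Real.sqrt m ≤ s (σ j))
    (hgreedy : ∀ (j : Fin n) (i : Fin m), 1 / Real.sqrt m ≤ s i →
      (∑ j' ∈ Finset.univ.filter (fun j' => j' < j ∧ σ j' = σ j), p j') / s (σ j) ≤
        (∑ j' ∈ Finset.univ.filter (fun j' => j' < j ∧ σ j' = i), p j') / s i) :
    (⨆ i, (∑ j ∈ Finset.univ.filter (fun j => σ j = i), p j) / s i) ≤
      3 * Real.sqrt m * T :=
  stmt9_general m n s hpos hle hmax p hp T ρ hρ σ hσF hgreedy
end

section
/- Let m ≥ 2 and consider m machines, where machine 0 has speed 1 and machines 1, …, m−1 each have speed 1/√m. A deterministic non-clairvoyant algorithm is a function A mapping each finite sequence of previously revealed job sizes to a machine in {0, 1, …, m−1}; upon the arrival of the j-th job it places that job on machine A(p_1, …, p_{j−1}). Then for every such function A there exists a sequence of m job sizes p_1, …, p_m, each equal to either 1/√m or 1 and with exactly one job of size 1, such that: (a) the schedule produced by A, namely σ(j) = A(p_1, …, p_{j−1}), has makespan (maximum over machines i of (Σ_{j : σ(j) = i} p_j) divided by the speed of i) at least √m; and (b) there exists an assignment of the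 same jobs to the machines with makespan at most 1. -/
open Finset

/-- Lower bound of `√m` on the clairvoyance gap for related machines: there are `m`
machines, machine `0` of speed `1` and `m − 1` machines of speed `1/√m`. For every
deterministic non-clairvoyant algorithm `A` (mapping the sequence of previously
revealed job sizes to a machine) there is a sequence of `m` job sizes, each equal to
`1/√m` or `1` with exactly one size-`1` job, such that the schedule produced by `A`
has makespan at least `√m`, while some assignment of the same jobs has makespan at
most `1`. -/
theorem stmt10 (m : ℕ) (hm : 2 ≤ m) (A : List ℝ → Fin m) :
    ∃ p : Fin m → ℝ,
      (∀ j, p j = 1 / Real.sqrt m ∨ p j = 1) ∧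
      (∃! j, p j = 1) ∧
      (Real.sqrt m ≤
        ⨆ i : Fin m,
          (∑ j ∈ Finset.univ.filter
              (fun j : Fin m => A ((List.ofFn p).take j.val) = i), p j) /
            (if i.val = 0 then 1 else 1 / Real.sqrt m)) ∧
      (∃ ρ : Fin m → Fin m,
        (⨆ i : Fin m,
          (∑ j ∈ Finset.univ.filter (fun j => ρ j = i), p j) /
            (if i.val = 0 then 1 else 1 / Real.sqrt m)) ≤ 1) := by
  haveI : NeZero m := ⟨by omega⟩
  have hm0 : (0:ℝ) < m := by positivity
  have h1 : (1:ℝ) < Real.sqrt m := by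
    rw [show (1:ℝ) = Real.sqrt 1 from Real.sqrt_one.symm]
    exact Real.sqrt_lt_sqrt (by norm_num) (by exact_mod_cast (by omega : 1 < m))
  have hrpos : (0:ℝ) < Real.sqrt m := lt_trans one_pos h1
  set s : ℝ := 1 / Real.sqrt m with hs
  have hspos : 0 < s := by positivity
  have hslt : s < 1 := by rw [hs, div_lt_one hrpos]; exact h1
  have hsq : Real.sqrt m * Real.sqrt m = (m:ℝ) := Real.mul_self_sqrt (le_of_lt hm0)
  have hss : s * Real.sqrt m = 1 := by
    rw [hs]; field_simp
  -- prefix lemma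
  have htake : ∀ (jb : Fin m) (n : ℕ), n ≤ jb.val →
      (List.ofFn (fun j : Fin m => if j = jb then (1:ℝ) else s)).take n
        = List.replicate n s := by
    intro jb n hn
    have hnm : n ≤ m := le_trans hn (le_of_lt jb.isLt)
    apply List.ext_getElem
    · simp [List.length_take]; omega
    · intro i hi1 hi2
      simp only [List.length_take, List.length_ofFn] at hi1
      rw [List.getElem_take, List.getElem_ofFn, List.getElem_replicate]
      rw [if_neg]
      intro hc
      have : (i : ℕ) = jb.val := by
        have := congrArg Fin.val hc
        simpa using this
      omega
  have hpnonneg : ∀ (jb j : Fin m), (0:ℝ) ≤ if j = jb then (1:ℝ) else s := by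
    intro jb j; split <;> linarith
  -- main: given a big-job position and the algorithm makespan bound, conclude
  have main : ∀ jb : Fin m,
      (Real.sqrt m ≤
        ⨆ i : Fin m,
          (∑ j ∈ Finset.univ.filter
              (fun j : Fin m =>
                A ((List.ofFn (fun j : Fin m => if j = jb then (1:ℝ) else s)).take j.val) = i),
              (if j = jb then (1:ℝ) else s)) /
            (if i.val = 0 then 1 else 1 / Real.sqrt m)) →
      (∃ p : Fin m → ℝ,
        (∀ j, p j = 1 / Real.sqrt m ∨ p j = 1) ∧
        (∃! j, p j = 1) ∧
        (Real.sqrt m ≤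
          ⨆ i : Fin m,
            (∑ j ∈ Finset.univ.filter
                (fun j : Fin m => A ((List.ofFn p).take j.val) = i), p j) /
              (if i.val = 0 then 1 else 1 / Real.sqrt m)) ∧
        (∃ ρ : Fin m → Fin m,
          (⨆ i : Fin m,
            (∑ j ∈ Finset.univ.filter (fun j => ρ j = i), p j) /
              (if i.val = 0 then 1 else 1 / Real.sqrt m)) ≤ 1)) := by
    intro jb halg
    refine ⟨fun j => if j = jb then (1:ℝ) else s, ?_, ?_, halg, ?_⟩
    · intro j
      by_cases h : j = jb <;> simp [h, hs]
    · refine ⟨jb, by simp, fun y hy => ?_⟩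
      by_contra hne
      have hy' : (if y = jb then (1:ℝ) else s) = 1 := hy
      rw [if_neg hne] at hy'
      linarith
    · refine ⟨Equiv.swap jb 0, ciSup_le fun i => ?_⟩
      have hfil : Finset.univ.filter (fun j => Equiv.swap jb 0 j = i)
          = {(Equiv.swap jb 0).symm i} := by
        ext j
        simp [Equiv.apply_eq_iff_eq_symm_apply]
      rw [hfil, Finset.sum_singleton, Equiv.symm_swap]
      by_cases hi : i.val = 0
      · have hieq : i = 0 := by
          ext; simpa using hi
        subst hieq
        simp [Equiv.swap_apply_right]
      · rw [if_neg hi]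
        have hne0 : i ≠ 0 := fun h => hi (by simp [h])
        have hnejb : Equiv.swap jb 0 i ≠ jb := by
          rcases eq_or_ne i jb with h | h
          · subst h
            rw [Equiv.swap_apply_left]
            exact fun hc => hne0 hc.symm
          · rw [Equiv.swap_apply_of_ne_of_ne h hne0]
            exact h
        rw [if_neg hnejb]
        have hdd : s / (1 / Real.sqrt m) = 1 := by
          rw [← hs]; exact div_self hspos.ne'
        rw [hdd]
  by_cases hcase : ∃ jb : Fin m, A (List.replicate jb.val s) ≠ ⟨0, by omega⟩
  · obtain ⟨jb, hA⟩ := hcase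
    apply main jb
    set p : Fin m → ℝ := fun j => if j = jb then (1:ℝ) else s with hp
    have hpre : (List.ofFn p).take jb.val = List.replicate jb.val s :=
      htake jb jb.val le_rfl
    set i0 : Fin m := A ((List.ofFn p).take jb.val) with hi0
    have hi0ne : i0.val ≠ 0 := by
      intro hc
      apply hA
      rw [← hpre]
      ext
      exact hc
    have hterm : Real.sqrt m ≤
        (∑ j ∈ Finset.univ.filter
            (fun j : Fin m => A ((List.ofFn p).take j.val) = i0), p j) /
          (if i0.val = 0 then 1 else 1 / Real.sqrt m) := by
      rw [if_neg hi0ne]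
      have hmem : jb ∈ Finset.univ.filter
          (fun j : Fin m => A ((List.ofFn p).take j.val) = i0) := by
        simp [hi0]
      have hsum : (1:ℝ) ≤ ∑ j ∈ Finset.univ.filter
          (fun j : Fin m => A ((List.ofFn p).take j.val) = i0), p j := by
        have := Finset.single_le_sum (f := p)
          (fun j _ => hpnonneg jb j) hmem
        simpa [hp] using this
      rw [one_div, le_div_iff₀ (by positivity)]
      rw [mul_inv_cancel₀ hrpos.ne']
      exact hsum
    exact le_trans hterm (le_ciSup (f := fun i : Fin m =>
      (∑ j ∈ Finset.univ.filter (fun j : Fin m => A ((List.ofFn p).take j.val) = i), p j) /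
        (if i.val = 0 then 1 else 1 / Real.sqrt m)) (Set.finite_range _).bddAbove i0)
  · push_neg at hcase
    set jb : Fin m := ⟨m - 1, by omega⟩ with hjb
    apply main jb
    set p : Fin m → ℝ := fun j => if j = jb then (1:ℝ) else s with hp
    have hfil : Finset.univ.filter
        (fun j : Fin m => A ((List.ofFn p).take j.val) = (⟨0, by omega⟩ : Fin m))
        = Finset.univ := by
      ext j
      simp only [Finset.mem_filter, Finset.mem_univ, true_and, iff_true]
      have : j.val ≤ jb.val := by
        simp only [hjb]
        omega
      rw [htake jb j.val this]
      exact hcase j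
    have hterm : Real.sqrt m ≤
        (∑ j ∈ Finset.univ.filter
            (fun j : Fin m => A ((List.ofFn p).take j.val) = (⟨0, by omega⟩ : Fin m)), p j) /
          (if (⟨0, by omega⟩ : Fin m).val = 0 then 1 else 1 / Real.sqrt m) := by
      rw [hfil, if_pos rfl, div_one]
      have hsum : ∑ j : Fin m, p j = (m:ℝ) * s + (1 - s) := by
        have : ∀ j : Fin m, p j = s + (if j = jb then (1:ℝ) - s else 0) := by
          intro j
          by_cases h : j = jb <;> simp [hp, h]
        rw [Finset.sum_congr rfl (fun j _ => this j)]
        rw [Finset.sum_add_distrib, Finset.sum_ite_eq' Finset.univ jb]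
        simp [mul_comm]
      rw [hsum]
      have hms : (m:ℝ) * s = Real.sqrt m := by
        rw [hs]; field_simp; rw [Real.sq_sqrt hm0.le]
      rw [hms]
      linarith
    exact le_trans hterm (le_ciSup (f := fun i : Fin m =>
      (∑ j ∈ Finset.univ.filter (fun j : Fin m => A ((List.ofFn p).take j.val) = i), p j) /
        (if i.val = 0 then 1 else 1 / Real.sqrt m)) (Set.finite_range _).bddAbove (⟨0, by omega⟩ : Fin m))
end
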